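/- arXiv:1807.01412 — 8 statements merged into one kernel-verified Lean document; each statement's English description precedes it below -/
import Mathlib

section
/- Assume additionally α + β ≠ 0 and set μ = a/(α + β). Then μ_n/n → μ as n → ∞ if and only if μ_n − μ_{n−1} → μ as n → ∞. -/
open Filter Topology

/-- **Corollary 2.3.** For the mean recurrence with `α + β ≠ 0` and `μ := a/(α+β)`,
the estimate `μ_n ∼ μ n` is equivalent to `μ_n - μ_{n-1} → μ`. -/
theorem mean_linear_iff_increment
    (α β γ a c μ₀ : ℝ) (hα : 0 < α) (hαγ : 0 < α + γ) (hαβ : α + β ≠ 0)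
    (μ : ℕ → ℝ) (hμ0 : μ 0 = μ₀)
    (hrec : ∀ n : ℕ, μ (n + 1) =
      (1 - β / (α * (n + 1) + γ)) * μ n + (a * (n + 1) + c) / (α * (n + 1) + γ)) :
    Tendsto (fun n : ℕ => μ n / n) atTop (𝓝 (a / (α + β))) ↔
    Tendsto (fun n : ℕ => μ (n + 1) - μ n) atTop (𝓝 (a / (α + β))) := by
  set L := a / (α + β) with hL
  have hDpos : ∀ n : ℕ, 0 < α * (n + 1) + γ := by
    intro n
    have : (0:ℝ) ≤ α * n := by positivity
    nlinarith [hα, hαγ]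
  -- auxiliary limits
  have hinv : Tendsto (fun n : ℕ => (α + γ) / n) atTop (𝓝 0) :=
    tendsto_const_div_atTop_nhds_zero_nat _
  have hinv2 : Tendsto (fun n : ℕ => (a + c) / n) atTop (𝓝 0) :=
    tendsto_const_div_atTop_nhds_zero_nat _
  have hden : Tendsto (fun n : ℕ => α + (α + γ) / n) atTop (𝓝 α) := by
    simpa using (tendsto_const_nhds.add hinv)
  have hnum : Tendsto (fun n : ℕ => a + (a + c) / n) atTop (𝓝 a) := by
    simpa using (tendsto_const_nhds.add hinv2)
  have hg : Tendsto (fun n : ℕ => (n : ℝ) / (α * (n + 1) + γ)) atTop (𝓝 (1 / α)) := by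
    have := (tendsto_const_nhds : Tendsto (fun _ : ℕ => (1:ℝ)) atTop (𝓝 1)).div hden hα.ne'
    apply this.congr'
    filter_upwards [eventually_ge_atTop 1] with n hn
    have hn' : (0:ℝ) < n := by exact_mod_cast hn
    have hD := hDpos n
    have hE : α + (α + γ) / n ≠ 0 := (add_pos hα (div_pos hαγ hn')).ne'
    simp only [Pi.div_apply]
    rw [div_eq_div_iff hE hD.ne']
    field_simp
    ring
  have hh : Tendsto (fun n : ℕ => (a * (n + 1) + c) / (α * (n + 1) + γ)) atTop (𝓝 (a / α)) := by
    have := hnum.div hden hα.ne'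
    apply this.congr'
    filter_upwards [eventually_ge_atTop 1] with n hn
    have hn' : (0:ℝ) < n := by exact_mod_cast hn
    have hD := hDpos n
    have hE : α + (α + γ) / n ≠ 0 := (add_pos hα (div_pos hαγ hn')).ne'
    simp only [Pi.div_apply]
    rw [div_eq_div_iff hE hD.ne']
    field_simp
    ring
  constructor
  · intro h
    have key : Tendsto (fun n : ℕ => (-β) * (μ n / n) * ((n : ℝ) / (α * (n + 1) + γ))
        + (a * (n + 1) + c) / (α * (n + 1) + γ)) atTop
        (𝓝 ((-β) * L * (1 / α) + a / α)) :=
      ((tendsto_const_nhds.mul h).mul hg).add hh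
    have hval : (-β) * L * (1 / α) + a / α = L := by
      rw [hL]
      field_simp
      ring
    rw [hval] at key
    apply key.congr'
    filter_upwards [eventually_ge_atTop 1] with n hn
    have hn' : (0:ℝ) < n := by exact_mod_cast hn
    have hD := hDpos n
    rw [hrec n]
    field_simp
    ring
  · intro h
    have hc := h.cesaro
    have hzero : Tendsto (fun n : ℕ => μ 0 / n) atTop (𝓝 0) :=
      tendsto_const_div_atTop_nhds_zero_nat _
    have hsum : Tendsto (fun n : ℕ => μ 0 / n + (n:ℝ)⁻¹ * ∑ i ∈ Finset.range n, (μ (i+1) - μ i))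
        atTop (𝓝 (0 + L)) := hzero.add hc
    rw [zero_add] at hsum
    apply hsum.congr
    intro n
    rw [Finset.sum_range_sub]
    rcases Nat.eq_zero_or_pos n with h0 | h0
    · simp [h0]
    · have hn' : (n:ℝ) ≠ 0 := by exact_mod_cast h0.ne'
      field_simp
      ring
end

section
/- For every v ∈ (0,1), the function F_v(z) := e^{p(1−v)z} · ((1−v)/(1 − v·e^{q(1−v)z}))^r (real powers of positive bases, defined for real z with v·e^{q(1−v)z} < 1) is infinitely differentiable on a neighborhood of 0 and is the exponential generating function of the P_n: for every n ≥ 0, the n-th derivative of F_v at z = 0 equals P_n(v). -/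
open Polynomial


noncomputable def Gaux (p q r v : ℝ) (P : ℕ → Polynomial ℝ) (n : ℕ) (z : ℝ) : ℝ :=
  Real.exp (p * (1 - v) * z) *
    ((1 - v) / (1 - v * Real.exp (q * (1 - v) * z))) ^ r *
    ((1 - v) / (1 - v * Real.exp (q * (1 - v) * z))) ^ n *
    (P n).eval (v * Real.exp (q * (1 - v) * z))

lemma W_hasDerivAt (q v z : ℝ) :
    HasDerivAt (fun z => v * Real.exp (q * (1 - v) * z))
      (q * (1 - v) * (v * Real.exp (q * (1 - v) * z))) z := by
  have h1 : HasDerivAt (fun z : ℝ => q * (1 - v) * z) (q * (1 - v)) z := by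
    simpa using (hasDerivAt_id z).const_mul (q * (1 - v))
  have h2 := (h1.exp).const_mul v
  refine h2.congr_deriv ?_
  ring

lemma Gaux_hasDerivAt (p q r v : ℝ) (P : ℕ → Polynomial ℝ)
    (hrec : ∀ n : ℕ, P (n + 1) =
      (C (q * ((n : ℝ) + 1)) * X + C p + C (q * r - q - p) * X) * P n +
        C q * X * (1 - X) * derivative (P n))
    (hv0 : 0 < v) (hv1 : v < 1) (n : ℕ) (z : ℝ)
    (hz : v * Real.exp (q * (1 - v) * z) < 1) :
    HasDerivAt (Gaux p q r v P n) (Gaux p q r v P (n + 1) z) z := by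
  set W : ℝ → ℝ := fun z => v * Real.exp (q * (1 - v) * z) with hWdef
  have hD : 0 < 1 - W z := by simpa using hz
  have hDne : (1 - W z) ≠ 0 := hD.ne'
  have ha : (0:ℝ) < 1 - v := by linarith
  have hB : (0:ℝ) < (1 - v) / (1 - W z) := div_pos ha hD
  have hBne : ((1 - v) / (1 - W z)) ≠ 0 := hB.ne'
  have hE : HasDerivAt (fun z => Real.exp (p * (1 - v) * z))
      (p * (1 - v) * Real.exp (p * (1 - v) * z)) z := by
    have h1 : HasDerivAt (fun z : ℝ => p * (1 - v) * z) (p * (1 - v)) z := by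
      simpa using (hasDerivAt_id z).const_mul (p * (1 - v))
    have h2 := h1.exp
    convert h2 using 1; ring
  have hW : HasDerivAt W (q * (1 - v) * W z) z := W_hasDerivAt q v z
  have hDder : HasDerivAt (fun z => 1 - W z) (-(q * (1 - v) * W z)) z := by
    exact ((hasDerivAt_const z (1:ℝ)).sub hW).congr_deriv (by ring)
  have hBder : HasDerivAt (fun z => (1 - v) / (1 - W z))
      (q * W z * ((1 - v) / (1 - W z)) ^ 2) z := by
    have := (hasDerivAt_const z (1 - v)).div hDder hDne
    refine this.congr_deriv ?_
    field_simp
    ring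
  have hR : HasDerivAt (fun z => ((1 - v) / (1 - W z)) ^ r)
      (q * W z * ((1 - v) / (1 - W z)) ^ 2 * r * ((1 - v) / (1 - W z)) ^ (r - 1)) z :=
    hBder.rpow_const (Or.inl hBne)
  have hN : HasDerivAt (fun z => ((1 - v) / (1 - W z)) ^ n)
      ((n : ℝ) * ((1 - v) / (1 - W z)) ^ (n - 1) * (q * W z * ((1 - v) / (1 - W z)) ^ 2)) z :=
    hBder.pow n
  have hQ : HasDerivAt (fun z => (P n).eval (W z))
      ((derivative (P n)).eval (W z) * (q * (1 - v) * W z)) z :=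
    (Polynomial.hasDerivAt (P n) (W z)).comp z hW
  have htot := ((hE.mul hR).mul hN).mul hQ
  refine htot.congr_deriv (Eq.symm ?_)
  have h1 : ((1 - v) / (1 - W z)) ^ (r - 1) * ((1 - v) / (1 - W z))
      = ((1 - v) / (1 - W z)) ^ r := by
    rw [Real.rpow_sub_one hBne]
    field_simp
  have h2 : (n : ℝ) * (((1 - v) / (1 - W z)) ^ (n - 1) * ((1 - v) / (1 - W z)))
      = (n : ℝ) * ((1 - v) / (1 - W z)) ^ n := by
    cases n with
    | zero => simp
    | succ m => rw [Nat.add_sub_cancel, ← pow_succ]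
  have hBD : ((1 - v) / (1 - W z)) * (1 - W z) = 1 - v := div_mul_cancel₀ _ hDne
  simp only [Gaux, hrec n, eval_add, eval_mul, eval_sub, eval_one, eval_X, eval_C, Pi.mul_apply]
  linear_combination
    (Real.exp (p * (1 - v) * z) * ((1 - v) / (1 - W z)) ^ r * ((1 - v) / (1 - W z)) ^ n *
      (p * (P n).eval (W z) + q * W z * (derivative (P n)).eval (W z))) * hBD
    - (r * q * W z * (P n).eval (W z) * Real.exp (p * (1 - v) * z) *
        ((1 - v) / (1 - W z)) ^ n * ((1 - v) / (1 - W z))) * h1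
    - (Real.exp (p * (1 - v) * z) * ((1 - v) / (1 - W z)) ^ r * q * W z *
        ((1 - v) / (1 - W z)) * (P n).eval (W z)) * h2


/-- **The exponential generating function of the class `𝒜(p,q,r)`** (eq. (4.2)).
For `v ∈ (0,1)`, the function `F_v(z) = e^{p(1-v)z} ((1-v)/(1 - v e^{q(1-v)z}))^r` is smooth
on a neighbourhood of `0` and its `n`-th derivative at `0` equals `P_n(v)`. -/
theorem egf_of_Apqr
    (p q r : ℝ) (hq : 0 < q)
    (P : ℕ → Polynomial ℝ) (hP0 : P 0 = 1)
    (hrec : ∀ n : ℕ, P (n + 1) =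
      (C (q * ((n : ℝ) + 1)) * X + C p + C (q * r - q - p) * X) * P n +
        C q * X * (1 - X) * derivative (P n)) :
    ∀ v : ℝ, v ∈ Set.Ioo (0 : ℝ) 1 →
      ∃ s : Set ℝ, IsOpen s ∧ (0 : ℝ) ∈ s ∧
        ContDiffOn ℝ (⊤ : ℕ∞)
          (fun z : ℝ => Real.exp (p * (1 - v) * z) *
            ((1 - v) / (1 - v * Real.exp (q * (1 - v) * z))) ^ r) s ∧
        ∀ n : ℕ,
          iteratedDeriv n
            (fun z : ℝ => Real.exp (p * (1 - v) * z) *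
              ((1 - v) / (1 - v * Real.exp (q * (1 - v) * z))) ^ r) 0
          = (P n).eval v := by
  intro v hv
  obtain ⟨hv0, hv1⟩ := hv
  have ha : (0:ℝ) < 1 - v := by linarith
  set s : Set ℝ := {z : ℝ | v * Real.exp (q * (1 - v) * z) < 1} with hsdef
  have hWc : Continuous fun z : ℝ => v * Real.exp (q * (1 - v) * z) := by
    exact continuous_const.mul (Real.continuous_exp.comp (continuous_const.mul continuous_id))
  have hsopen : IsOpen s := isOpen_lt hWc continuous_const
  have h0s : (0:ℝ) ∈ s := by
    simp only [hsdef, Set.mem_setOf_eq, mul_zero, Real.exp_zero, mul_one]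
    exact hv1
  have hsmooth : ContDiffOn ℝ (⊤ : ℕ∞)
      (fun z : ℝ => Real.exp (p * (1 - v) * z) *
        ((1 - v) / (1 - v * Real.exp (q * (1 - v) * z))) ^ r) s := by
    intro z hz
    have hD : 0 < 1 - v * Real.exp (q * (1 - v) * z) := by
      have : v * Real.exp (q * (1 - v) * z) < 1 := hz
      linarith
    have hB : (0:ℝ) < (1 - v) / (1 - v * Real.exp (q * (1 - v) * z)) := div_pos ha hD
    have hE : ContDiffAt ℝ (⊤ : ℕ∞) (fun z : ℝ => Real.exp (p * (1 - v) * z)) z :=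
      (Real.contDiff_exp.comp (contDiff_const.mul contDiff_id)).contDiffAt
    have hWcd : ContDiffAt ℝ (⊤ : ℕ∞) (fun z : ℝ => 1 - v * Real.exp (q * (1 - v) * z)) z :=
      (contDiff_const.sub (contDiff_const.mul
        (Real.contDiff_exp.comp (contDiff_const.mul contDiff_id)))).contDiffAt
    have hBcd : ContDiffAt ℝ (⊤ : ℕ∞)
        (fun z : ℝ => (1 - v) / (1 - v * Real.exp (q * (1 - v) * z))) z :=
      contDiffAt_const.div hWcd hD.ne'
    have hRcd : ContDiffAt ℝ (⊤ : ℕ∞)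
        (fun z : ℝ => ((1 - v) / (1 - v * Real.exp (q * (1 - v) * z))) ^ r) z :=
      ContDiffAt.comp (g := fun x : ℝ => x ^ r) z (Real.contDiffAt_rpow_const_of_ne hB.ne') hBcd
    exact (hE.mul hRcd).contDiffWithinAt
  refine ⟨s, hsopen, h0s, hsmooth, ?_⟩
  have key : ∀ n : ℕ, ∀ z ∈ s,
      iteratedDeriv n
        (fun z : ℝ => Real.exp (p * (1 - v) * z) *
          ((1 - v) / (1 - v * Real.exp (q * (1 - v) * z))) ^ r) z
      = Gaux p q r v P n z := by
    intro n
    induction n with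
    | zero =>
      intro z _
      simp [iteratedDeriv_zero, Gaux, hP0, mul_assoc]
    | succ m ih =>
      intro z hz
      rw [iteratedDeriv_succ]
      have hev : (iteratedDeriv m
          (fun z : ℝ => Real.exp (p * (1 - v) * z) *
            ((1 - v) / (1 - v * Real.exp (q * (1 - v) * z))) ^ r))
          =ᶠ[nhds z] Gaux p q r v P m := by
        filter_upwards [hsopen.mem_nhds hz] with y hy using ih y hy
      rw [hev.deriv_eq]
      exact (Gaux_hasDerivAt p q r v P hrec hv0 hv1 m z hz).deriv
  intro n
  rw [key n 0 h0s]
  simp [Gaux, div_self ha.ne', Real.one_rpow]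
end

section
/- For all real p, q, r with q > 0, all v ∈ (0,1), and all real z in a sufficiently small neighborhood of 0 (so that all the bases of the real powers below are positive): (i) F(v·z, 1/v) = e^{(q·r−p)(1−v)z} · ((1−v)/(1 − v·e^{q(1−v)z}))^r; in other words, the reciprocal substitution (z,v) ↦ (vz, 1/v) carries the function of type (p,q,r) to the one of type (qr−p, q, r). (ii) If p = q·r, then ∂F/∂z (z,v) = p · e^{p(1−v)z} · ((1−v)/(1 − v·e^{q(1−v)z}))^{r+1}. -/
/-- The function `F(z,v) = e^{p(1-v)z} ((1-v)/(1 - v e^{q(1-v)z}))^r` of type `𝒜(p,q,r)`. -/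
noncomputable def Apqr (p q r : ℝ) (z v : ℝ) : ℝ :=
  Real.exp (p * (1 - v) * z) * ((1 - v) / (1 - v * Real.exp (q * (1 - v) * z))) ^ r

/-- **Lemma 4.2.** (i) The reciprocal substitution `(z,v) ↦ (vz, 1/v)` carries the function
of type `𝒜(p,q,r)` to the one of type `𝒜(qr-p,q,r)`; (ii) if `p = qr`, then
`∂_z F ∈ p 𝒜(p,q,r+1)`. -/
theorem Apqr_reciprocal_and_deriv
    (p q r : ℝ) (hq : 0 < q) :
    ∀ v : ℝ, v ∈ Set.Ioo (0 : ℝ) 1 → ∃ ε > (0 : ℝ), ∀ z : ℝ, |z| < ε →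
      (Apqr p q r (v * z) (1 / v) =
        Real.exp ((q * r - p) * (1 - v) * z) *
          ((1 - v) / (1 - v * Real.exp (q * (1 - v) * z))) ^ r) ∧
      (p = q * r →
        deriv (fun w : ℝ => Apqr p q r w v) z =
          p * Real.exp (p * (1 - v) * z) *
            ((1 - v) / (1 - v * Real.exp (q * (1 - v) * z))) ^ (r + 1)) := by
  rintro v ⟨hv0, hv1⟩
  have h1v : 0 < 1 - v := by linarith
  have hqv : 0 < q * (1 - v) := by positivity
  refine ⟨-Real.log v / (q * (1 - v)),
    div_pos (neg_pos.2 (Real.log_neg hv0 hv1)) hqv, fun z hz => ?_⟩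
  have hzε : z < -Real.log v / (q * (1 - v)) := lt_of_le_of_lt (le_abs_self z) hz
  have hEpos : 0 < Real.exp (q * (1 - v) * z) := Real.exp_pos _
  set E : ℝ := Real.exp (q * (1 - v) * z) with hEdef
  have hvE : v * E < 1 := by
    have h1 : q * (1 - v) * z < -Real.log v := by
      have := (lt_div_iff₀ hqv).1 hzε
      linarith [this]
    have h2 : E < v⁻¹ := by
      rw [hEdef]
      calc Real.exp (q * (1 - v) * z) < Real.exp (-Real.log v) := Real.exp_lt_exp.2 h1
        _ = v⁻¹ := by rw [Real.exp_neg, Real.exp_log hv0]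
    calc v * E < v * v⁻¹ := mul_lt_mul_of_pos_left h2 hv0
      _ = 1 := mul_inv_cancel₀ hv0.ne'
  have hD : 0 < 1 - v * E := by linarith
  have hG : 0 < (1 - v) / (1 - v * E) := div_pos h1v hD
  constructor
  · -- part (i)
    have harg : q * (1 - 1 / v) * (v * z) = -(q * (1 - v) * z) := by
      field_simp; ring
    have hargp : p * (1 - 1 / v) * (v * z) = -(p * (1 - v) * z) := by
      field_simp; ring
    have hX : 1 - (1 / v) * E⁻¹ ≠ 0 := by
      have h1 : (1 : ℝ) < (1 / v) * E⁻¹ := by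
        rw [← one_div E, div_mul_div_comm, lt_div_iff₀ (by positivity)]
        linarith
      intro h
      nlinarith
    have hbase : (1 - 1 / v) / (1 - (1 / v) * Real.exp (q * (1 - 1 / v) * (v * z)))
        = E * ((1 - v) / (1 - v * E)) := by
      rw [harg, Real.exp_neg, ← hEdef, div_eq_iff hX]
      field_simp
      ring
    rw [Apqr, hargp, hbase, Real.mul_rpow hEpos.le hG.le, hEdef,
      ← Real.exp_mul, ← mul_assoc, ← Real.exp_add]
    ring_nf
  · -- part (ii)
    intro hp
    have h1 : HasDerivAt (fun w : ℝ => q * (1 - v) * w) (q * (1 - v)) z := by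
      simpa using (hasDerivAt_id z).const_mul (q * (1 - v))
    have hE' := h1.exp
    have hd' : HasDerivAt (fun w => 1 - v * Real.exp (q * (1 - v) * w))
        (0 - v * (Real.exp (q * (1 - v) * z) * (q * (1 - v)))) z :=
      ((hE'.const_mul v).const_sub 1).congr_deriv (by ring)
    have hg : HasDerivAt (fun w => (1 - v) / (1 - v * Real.exp (q * (1 - v) * w)))
        ((0 * (1 - v * E) - (1 - v) * (0 - v * (E * (q * (1 - v))))) / (1 - v * E) ^ 2) z :=
      (hasDerivAt_const z (1 - v)).div hd' hD.ne'
    have hgr := hg.rpow_const (p := r) (Or.inl hG.ne')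
    have hP : HasDerivAt (fun w : ℝ => Real.exp (p * (1 - v) * w))
        (Real.exp (p * (1 - v) * z) * (p * (1 - v))) z := by
      have : HasDerivAt (fun w : ℝ => p * (1 - v) * w) (p * (1 - v)) z := by
        simpa using (hasDerivAt_id z).const_mul (p * (1 - v))
      exact this.exp
    have hF := hP.mul hgr
    have heq : (fun w : ℝ => Apqr p q r w v) =
        fun w => Real.exp (p * (1 - v) * w) *
          ((1 - v) / (1 - v * Real.exp (q * (1 - v) * w))) ^ r := rfl
    rw [heq, show (fun w : ℝ => Real.exp (p * (1 - v) * w) * ((1 - v) / (1 - v * Real.exp (q * (1 - v) * w))) ^ r) = (fun w : ℝ => Real.exp (p * (1 - v) * w)) * (fun w : ℝ => ((1 - v) / (1 - v * Real.exp (q * (1 - v) * w))) ^ r) from rfl, hF.deriv]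
    rw [Real.rpow_sub_one hG.ne', Real.rpow_add_one hG.ne']
    have hEr : (0 : ℝ) < ((1 - v) / (1 - v * E)) ^ r := Real.rpow_pos_of_pos hG r
    subst hp
    field_simp
    ring
end

section
/- Assume α > 0, α + γ > 0 and c₀ ≠ 0. Then Q_{n,0} = 1 for all n ≥ 0, and for all integers m ≥ 1 and n ≥ 1, the factorial moments satisfy the recurrence Q_{n,m} = (1 − m·β/(α·n+γ))·Q_{n−1,m} + ( m·((1−m)·β' + γ') / (α·n+γ) ) · Q_{n−1,m−1}. -/
open Polynomial

private lemma iteratedDeriv_polyEval (m : ℕ) (q : Polynomial ℝ) :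
    iteratedDeriv m (fun t : ℝ => q.eval t) = fun x => (derivative^[m] q).eval x := by
  induction m generalizing q with
  | zero => simp only [iteratedDeriv_zero, Function.iterate_zero, id_eq]
  | succ m ih =>
    rw [iteratedDeriv_succ']
    have hd : deriv (fun t : ℝ => q.eval t) = fun t : ℝ => (derivative q).eval t := by
      funext t; exact q.deriv
    rw [hd, ih, Function.iterate_succ_apply]

private lemma iterDeriv_eval_zero (q : Polynomial ℝ) (m : ℕ) :
    (derivative^[m] q).eval 0 = (m.factorial : ℝ) * q.coeff m := by
  rw [← Polynomial.coeff_zero_eq_eval_zero, Polynomial.coeff_iterate_derivative]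
  simp [Nat.descFactorial_self, nsmul_eq_mul]

private lemma coeff_X_mul_deriv (q : Polynomial ℝ) (m : ℕ) :
    (X * derivative q).coeff m = (m : ℝ) * q.coeff m := by
  cases m with
  | zero => simp [Polynomial.mul_coeff_zero]
  | succ m =>
    rw [Polynomial.coeff_X_mul, Polynomial.coeff_derivative]
    push_cast; ring

/-- **Lemma 6.1 (recurrence of the factorial moments).** With
`Q_{n,m}` the `m`-th derivative at `t = 0` of `t ↦ P_n(1+t)/P_n(1)`, one has `Q_{n,0} = 1`
and `Q_{n,m} = (1 - mβ/(αn+γ)) Q_{n-1,m} + m((1-m)β' + γ')/(αn+γ) · Q_{n-1,m-1}`. -/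
theorem factorial_moment_recurrence
    (α β β' γ γ' c₀ c₁ : ℝ) (hα : 0 < α) (hαγ : 0 < α + γ) (hc₀ : c₀ ≠ 0)
    (P : ℕ → Polynomial ℝ)
    (hP0 : P 0 = C c₀ + C c₁ * (X - 1))
    (hrec : ∀ n : ℕ, P (n + 1) =
      (C (α * ((n : ℝ) + 1) + γ) + C γ' * (X - 1)) * P n +
        (C β + C β' * (X - 1)) * (1 - X) * derivative (P n))
    (Q : ℕ → ℕ → ℝ)
    (hQ : ∀ n m, Q n m =
      iteratedDeriv m (fun t : ℝ => (P n).eval (1 + t) / (P n).eval 1) 0) :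
    (∀ n, Q n 0 = 1) ∧
    ∀ n m : ℕ, Q (n + 1) (m + 1) =
      (1 - ((m : ℝ) + 1) * β / (α * ((n : ℝ) + 1) + γ)) * Q n (m + 1) +
        (((m : ℝ) + 1) * ((1 - ((m : ℝ) + 1)) * β' + γ') / (α * ((n : ℝ) + 1) + γ)) *
          Q n m := by
  -- positivity of the coefficients α(n+1)+γ
  have ha : ∀ n : ℕ, (0:ℝ) < α * ((n : ℝ) + 1) + γ := by
    intro n
    have : α * ((n : ℝ) + 1) + γ = α * n + (α + γ) := by ring
    rw [this]
    have : (0:ℝ) ≤ α * n := by positivity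
    linarith
  -- P n (1) ≠ 0
  have heval1 : ∀ n, (P (n+1)).eval 1 = (α * ((n : ℝ) + 1) + γ) * (P n).eval 1 := by
    intro n
    rw [hrec n]; simp
  have hc : ∀ n, (P n).eval 1 ≠ 0 := by
    intro n
    induction n with
    | zero => simpa [hP0] using hc₀
    | succ n ih =>
      rw [heval1 n]
      exact mul_ne_zero (ne_of_gt (ha n)) ih
  -- the shifted polynomials
  set S : ℕ → Polynomial ℝ := fun n => (P n).comp (C 1 + X) with hS
  -- Q in terms of coefficients of S
  have hQ' : ∀ n m, Q n m = (m.factorial : ℝ) * (S n).coeff m / (P n).eval 1 := by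
    intro n m
    rw [hQ]
    have hfun : (fun t : ℝ => (P n).eval (1 + t) / (P n).eval 1)
        = fun t : ℝ => (C ((P n).eval 1)⁻¹ * S n).eval t := by
      funext t
      simp [hS, Polynomial.eval_comp, div_eq_inv_mul, mul_comm]
    rw [hfun, iteratedDeriv_polyEval, Polynomial.iterate_derivative_C_mul]
    simp only [Polynomial.eval_mul, Polynomial.eval_C, iterDeriv_eval_zero]
    field_simp
  constructor
  · intro n
    rw [hQ' n 0]
    have h0 : (S n).coeff 0 = (P n).eval 1 := by
      rw [Polynomial.coeff_zero_eq_eval_zero, hS]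
      simp [Polynomial.eval_comp]
    rw [h0]
    simp only [Nat.factorial_zero, Nat.cast_one, one_mul]
    exact div_self (hc n)
  · intro n m
    -- the recurrence for S
    have hScomp : S (n+1) = (C (α * ((n : ℝ) + 1) + γ) + C γ' * X) * S n
        - C β * (X * derivative (S n)) - C β' * (X * (X * derivative (S n))) := by
      have hder : (derivative (P n)).comp (1 + X) = derivative ((P n).comp (1 + X)) := by
        simp [Polynomial.derivative_comp]
      rw [hS]
      simp only [hrec n, Polynomial.add_comp, Polynomial.mul_comp, Polynomial.sub_comp,
        Polynomial.one_comp, Polynomial.C_comp, Polynomial.X_comp, Polynomial.C_1]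
      rw [hder]
      ring
    -- coefficient recurrence
    have hcoeff : (S (n+1)).coeff (m+1)
        = (α * ((n : ℝ) + 1) + γ - β * ((m:ℝ)+1)) * (S n).coeff (m+1)
          + (γ' - β' * m) * (S n).coeff m := by
      rw [hScomp]
      simp only [Polynomial.coeff_sub, add_mul, Polynomial.coeff_add, mul_assoc,
        Polynomial.coeff_C_mul, Polynomial.coeff_X_mul, Polynomial.coeff_derivative,
        coeff_X_mul_deriv]
      ring
    -- put everything together
    rw [hQ' (n+1) (m+1), hQ' n (m+1), hQ' n m, hcoeff, heval1 n]
    have h1 : ((m+1).factorial : ℝ) = ((m:ℝ)+1) * (m.factorial : ℝ) := by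
      rw [Nat.factorial_succ]; push_cast; ring
    rw [h1]
    have hane : (α * ((n : ℝ) + 1) + γ) ≠ 0 := ne_of_gt (ha n)
    field_simp
    ring
end

section
/- Assume α > 0, γ ≥ 0, c₀ ≠ 0, β ≠ 0, and 1 + τ₂ + τ₁ > 0, where τ₁ := −β/α and τ₂ := γ/α. Then for every n ≥ 0, Q_{n,1} = γ'/β + (c₁/c₀ − γ'/β) · [ Γ(n+1+τ₂+τ₁)·Γ(1+τ₂) ] / [ Γ(n+1+τ₂)·Γ(1+τ₂+τ₁) ]. -/
open Polynomial

lemma alg_step (α β γ' k X Y A B G1 G2 : ℝ) (hα : α ≠ 0) (hβ : β ≠ 0) (hY : Y ≠ 0)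
    (hB : B ≠ 0) (hG2 : G2 ≠ 0) (hrel : α * X = α * Y - β) :
    γ' / (α * Y) + (α * X) / (α * Y) * (γ' / β + k * (A * G1) / (B * G2)) =
      γ' / β + k * (X * A * G1) / (Y * B * G2) := by
  have hβ2 : β = α * Y - α * X := by linarith
  subst hβ2
  have h2 : α * Y - α * X ≠ 0 := hβ
  have h3 : Y - X ≠ 0 := by
    intro h; apply h2; have : Y = X := by linarith
    rw [this]; ring
  rw [show α * Y - α * X = α * (Y - X) by ring]
  field_simp
  ring

lemma key_rec (α β γ γ' : ℝ) (hα : 0 < α) (hγ : 0 ≤ γ) (hβ : β ≠ 0)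
    (hpos : 0 < 1 + γ / α + -β / α) (q0 : ℝ) (Qv : ℕ → ℝ) (hQ0 : Qv 0 = q0)
    (hstep : ∀ n : ℕ, Qv (n + 1) =
      γ' / (α * ((n : ℝ) + 1) + γ) + (α * ((n : ℝ) + 1) + γ - β) / (α * ((n : ℝ) + 1) + γ) * Qv n) :
    ∀ n : ℕ, Qv n = γ' / β + (q0 - γ' / β) *
      (Real.Gamma ((n : ℝ) + 1 + γ / α + -β / α) * Real.Gamma (1 + γ / α)) /
      (Real.Gamma ((n : ℝ) + 1 + γ / α) * Real.Gamma (1 + γ / α + -β / α)) := by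
  have hαne : α ≠ 0 := hα.ne'
  have hτ₂ : 0 ≤ γ / α := div_nonneg hγ hα.le
  have hG1 : Real.Gamma (1 + γ / α) ≠ 0 := (Real.Gamma_pos_of_pos (by linarith)).ne'
  have hG2 : Real.Gamma (1 + γ / α + -β / α) ≠ 0 := (Real.Gamma_pos_of_pos hpos).ne'
  intro n
  induction n with
  | zero =>
    simp only [Nat.cast_zero, zero_add, hQ0]
    rw [mul_comm (Real.Gamma (1 + γ / α)) (Real.Gamma (1 + γ / α + -β / α)),
      mul_div_assoc, div_self (mul_ne_zero hG2 hG1), mul_one]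
    ring
  | succ n ih =>
    have hx : (0:ℝ) < (n : ℝ) + 1 + γ / α + -β / α := by
      have : (0:ℝ) ≤ (n:ℝ) := Nat.cast_nonneg n
      linarith
    have hy : (0:ℝ) < (n : ℝ) + 1 + γ / α := by positivity
    have hGx : Real.Gamma ((n : ℝ) + 1 + γ / α) ≠ 0 := (Real.Gamma_pos_of_pos hy).ne'
    have e1 : Real.Gamma (((n:ℕ)+1 : ℕ) + 1 + γ / α + -β / α) =
        ((n : ℝ) + 1 + γ / α + -β / α) * Real.Gamma ((n : ℝ) + 1 + γ / α + -β / α) := by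
      push_cast
      rw [show (n:ℝ) + 1 + 1 + γ / α + -β / α = ((n:ℝ) + 1 + γ / α + -β / α) + 1 by ring,
        Real.Gamma_add_one hx.ne']
    have e2 : Real.Gamma (((n:ℕ)+1 : ℕ) + 1 + γ / α) =
        ((n : ℝ) + 1 + γ / α) * Real.Gamma ((n : ℝ) + 1 + γ / α) := by
      push_cast
      rw [show (n:ℝ) + 1 + 1 + γ / α = ((n:ℝ) + 1 + γ / α) + 1 by ring,
        Real.Gamma_add_one hy.ne']
    have hde : α * ((n : ℝ) + 1) + γ - β = α * ((n : ℝ) + 1 + γ / α + -β / α) := by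
      field_simp; ring
    have hde2 : α * ((n : ℝ) + 1) + γ = α * ((n : ℝ) + 1 + γ / α) := by
      field_simp
    have hrel : α * ((n : ℝ) + 1 + γ / α + -β / α) = α * ((n : ℝ) + 1 + γ / α) - β := by
      field_simp; ring
    rw [hstep n, ih, e1, e2, hde, hde2]
    exact alg_step α β γ' (q0 - γ' / β) _ _ _ _ _ _ hαne hβ hy.ne' hGx hG2 hrel

/-- **Lemma 6.2 (exact mean).** With `τ₁ = -β/α` and `τ₂ = γ/α`, and provided
`1 + τ₂ + τ₁ > 0`, the expected value `Q_{n,1}` of the coefficient distribution equals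
`γ'/β + (c₁/c₀ - γ'/β) Γ(n+1+τ₂+τ₁) Γ(1+τ₂) / (Γ(n+1+τ₂) Γ(1+τ₂+τ₁))`. -/
theorem factorial_moment_mean_exact
    (α β β' γ γ' c₀ c₁ : ℝ)
    (hα : 0 < α) (hγ : 0 ≤ γ) (hc₀ : c₀ ≠ 0) (hβ : β ≠ 0)
    (hpos : 0 < 1 + γ / α + -β / α)
    (P : ℕ → Polynomial ℝ)
    (hP0 : P 0 = C c₀ + C c₁ * (X - 1))
    (hrec : ∀ n : ℕ, P (n + 1) =
      (C (α * ((n : ℝ) + 1) + γ) + C γ' * (X - 1)) * P n +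
        (C β + C β' * (X - 1)) * (1 - X) * derivative (P n))
    (Q : ℕ → ℕ → ℝ)
    (hQ : ∀ n m, Q n m =
      iteratedDeriv m (fun t : ℝ => (P n).eval (1 + t) / (P n).eval 1) 0) :
    ∀ n : ℕ, Q n 1 =
      γ' / β + (c₁ / c₀ - γ' / β) *
        (Real.Gamma ((n : ℝ) + 1 + γ / α + -β / α) * Real.Gamma (1 + γ / α)) /
        (Real.Gamma ((n : ℝ) + 1 + γ / α) * Real.Gamma (1 + γ / α + -β / α)) := by
  -- eval at 1 recurrence
  have heval : ∀ n : ℕ, (P (n+1)).eval 1 = (α * ((n : ℝ) + 1) + γ) * (P n).eval 1 := by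
    intro n; rw [hrec n]; simp
  have hne : ∀ n : ℕ, (P n).eval 1 ≠ 0 := by
    intro n
    induction n with
    | zero => rw [hP0]; simpa using hc₀
    | succ n ih =>
      rw [heval n]
      have : (0:ℝ) < α * ((n : ℝ) + 1) + γ := by positivity
      exact mul_ne_zero this.ne' ih
  have hdeval : ∀ n : ℕ, (derivative (P (n+1))).eval 1 =
      γ' * (P n).eval 1 + (α * ((n : ℝ) + 1) + γ - β) * (derivative (P n)).eval 1 := by
    intro n
    rw [hrec n]
    simp [derivative_mul]
    ring
  -- Q n 1 = P_n'(1)/P_n(1)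
  have hQ1 : ∀ n : ℕ, Q n 1 = (derivative (P n)).eval 1 / (P n).eval 1 := by
    intro n
    rw [hQ n 1, iteratedDeriv_one]
    have h1 : HasDerivAt (fun t : ℝ => 1 + t) 1 0 := by
      simpa using (hasDerivAt_id (0:ℝ)).const_add (1:ℝ)
    have hd : HasDerivAt (fun t : ℝ => (P n).eval (1 + t))
        ((derivative (P n)).eval (1 + 0) * 1) 0 :=
      ((P n).hasDerivAt (1 + (0:ℝ))).comp 0 h1
    have := (hd.div_const ((P n).eval 1)).deriv
    simpa using this
  have hstep : ∀ n : ℕ, (fun n => (derivative (P n)).eval 1 / (P n).eval 1) (n + 1) =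
      γ' / (α * ((n : ℝ) + 1) + γ) + (α * ((n : ℝ) + 1) + γ - β) / (α * ((n : ℝ) + 1) + γ) *
        (fun n => (derivative (P n)).eval 1 / (P n).eval 1) n := by
    intro n
    simp only
    have ha := hne n
    rw [hdeval n, heval n]
    have hd : (α * ((n : ℝ) + 1) + γ) ≠ 0 := by positivity
    field_simp
  have hQ0 : (fun n => (derivative (P n)).eval 1 / (P n).eval 1) 0 = c₁ / c₀ := by
    simp [hP0]
  intro n
  rw [hQ1 n]
  exact key_rec α β γ γ' hα hγ hβ hpos (c₁ / c₀)
    (fun n => (derivative (P n)).eval 1 / (P n).eval 1) hQ0 hstep n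
end

section
/- Assume α > 0, γ ≥ 0, c₀ ≠ 0 and β ≠ 0, and put τ₁ := −β/α, τ₂ := γ/α. Then: (i) if β > 0 (so τ₁ < 0), Q_{n,1} = γ'/β + O(n^{τ₁}) as n → ∞; (ii) if β < 0 (so τ₁ > 0), Q_{n,1} = (c₁/c₀ − γ'/β) · (Γ(1+τ₂)/Γ(1+τ₂+τ₁)) · n^{τ₁} + O(1 + n^{τ₁−1}) as n → ∞. -/
open Polynomial Filter Asymptotics

private lemma aux_pow_le (M : ℕ) : ∀ u : ℝ, 0 ≤ u → u ≤ 1 →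
    (1+u)^M ≤ 1 + ((2:ℝ)^M - 1)*u := by
  induction M with
  | zero => intro u hu hu1; simp
  | succ M ih =>
    intro u hu hu1
    have h := ih u hu hu1
    have h2 : (0:ℝ) ≤ (2:ℝ)^M - 1 := by
      have : (1:ℝ) ≤ 2^M := one_le_pow₀ (by norm_num)
      linarith
    calc (1+u)^(M+1) = (1+u)^M * (1+u) := by ring
    _ ≤ (1 + ((2:ℝ)^M - 1)*u) * (1+u) := by
        apply mul_le_mul_of_nonneg_right h (by linarith)
    _ ≤ 1 + ((2:ℝ)^(M+1) - 1)*u := by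
        have hp : (2:ℝ)^(M+1) = 2 * 2^M := by ring
        nlinarith [mul_nonneg (mul_nonneg h2 hu) (sub_nonneg.2 hu1)]

private lemma aux_rpow_near_one (δ : ℝ) : ∃ K : ℝ, 0 ≤ K ∧ ∀ u : ℝ, 0 ≤ u → u ≤ 1 →
    |(1+u) ^ δ - 1| ≤ K * u := by
  set M : ℕ := ⌈|δ|⌉₊ with hMdef
  refine ⟨(2:ℝ)^M - 1, by nlinarith [one_le_pow₀ (show (1:ℝ) ≤ 2 by norm_num) (n := M)], ?_⟩
  intro u hu hu1
  have h1u : (1:ℝ) ≤ 1 + u := by linarith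
  have hMb : |δ| ≤ (M:ℝ) := Nat.le_ceil _
  have hupper : (1+u) ^ δ ≤ 1 + ((2:ℝ)^M - 1)*u := by
    calc (1+u)^δ ≤ (1+u)^(M:ℝ) :=
          Real.rpow_le_rpow_of_exponent_le h1u (le_trans (le_abs_self δ) hMb)
    _ = (1+u)^M := Real.rpow_natCast _ _
    _ ≤ _ := aux_pow_le M u hu hu1
  have hlower : 1 - ((2:ℝ)^M - 1)*u ≤ (1+u) ^ δ := by
    have h2 : (1+u)^δ ≥ (1+u)^(-(M:ℝ)) :=
      Real.rpow_le_rpow_of_exponent_le h1u (by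
        have := neg_abs_le δ; linarith)
    have h3 : (1+u)^(-(M:ℝ)) = 1/(1+u)^M := by
      rw [Real.rpow_neg (by linarith), Real.rpow_natCast, one_div]
    have hp : (0:ℝ) < (1+u)^M := pow_pos (by linarith) _
    have h4 : 1/(1+u)^M ≥ 1/(1 + ((2:ℝ)^M - 1)*u) := by
      apply one_div_le_one_div_of_le hp (aux_pow_le M u hu hu1)
    have hK : (0:ℝ) ≤ (2:ℝ)^M - 1 := by
      nlinarith [one_le_pow₀ (show (1:ℝ) ≤ 2 by norm_num) (n := M)]
    have h5 : 1 - ((2:ℝ)^M - 1)*u ≤ 1/(1 + ((2:ℝ)^M - 1)*u) := by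
      rw [le_div_iff₀ (by nlinarith)]
      nlinarith [mul_nonneg hK hu, sq_nonneg (((2:ℝ)^M - 1)*u)]
    linarith [h2, h3 ▸ h4]
  rw [abs_le]
  constructor <;> nlinarith

private lemma aux_gautschi {x s : ℝ} (hx : 0 < x) (hs0 : 0 ≤ s) (hs1 : s ≤ 1) :
    |Real.Gamma (x+s) / Real.Gamma x - x ^ s| ≤ s * x ^ (s-1) := by
  have hGx : 0 < Real.Gamma x := Real.Gamma_pos_of_pos hx
  have hGxs : 0 < Real.Gamma (x+s) := Real.Gamma_pos_of_pos (by linarith)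
  have hxs : (0:ℝ) < x + s := by linarith
  -- upper bound: Γ(x+s) ≤ x^s Γ(x)
  have hupper : Real.Gamma (x+s) ≤ x ^ s * Real.Gamma x := by
    have hc := Real.convexOn_log_Gamma.2 (Set.mem_Ioi.2 hx)
      (Set.mem_Ioi.2 (show (0:ℝ) < x + 1 by linarith))
      (by linarith : (0:ℝ) ≤ 1 - s) hs0 (by ring)
    simp only [smul_eq_mul, Function.comp_apply] at hc
    have heq : (1-s)*x + s*(x+1) = x + s := by ring
    rw [heq] at hc
    have hG1 : Real.Gamma (x+1) = x * Real.Gamma x := Real.Gamma_add_one hx.ne'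
    rw [hG1, Real.log_mul hx.ne' hGx.ne'] at hc
    have : Real.log (Real.Gamma (x+s)) ≤ Real.log (Real.Gamma x) + s * Real.log x := by
      linarith
    calc Real.Gamma (x+s) = Real.exp (Real.log (Real.Gamma (x+s))) := (Real.exp_log hGxs).symm
    _ ≤ Real.exp (Real.log (Real.Gamma x) + s * Real.log x) := Real.exp_le_exp.2 this
    _ = x ^ s * Real.Gamma x := by
        rw [Real.exp_add, Real.exp_log hGx, Real.rpow_def_of_pos hx, mul_comm s, mul_comm]
  -- lower bound: x Γ(x) ≤ Γ(x+s) (x+s)^(1-s)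
  have hlower : x * Real.Gamma x ≤ Real.Gamma (x+s) * (x+s) ^ (1-s) := by
    have hc := Real.convexOn_log_Gamma.2 (Set.mem_Ioi.2 hxs)
      (Set.mem_Ioi.2 (show (0:ℝ) < x + s + 1 by linarith))
      hs0 (by linarith : (0:ℝ) ≤ 1 - s) (by ring)
    simp only [smul_eq_mul, Function.comp_apply] at hc
    have heq : s*(x+s) + (1-s)*(x+s+1) = x + 1 := by ring
    rw [heq] at hc
    have hG1 : Real.Gamma (x+1) = x * Real.Gamma x := Real.Gamma_add_one hx.ne'
    have hG2 : Real.Gamma (x+s+1) = (x+s) * Real.Gamma (x+s) := Real.Gamma_add_one hxs.ne'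
    rw [hG1, hG2, Real.log_mul hx.ne' hGx.ne', Real.log_mul hxs.ne' hGxs.ne'] at hc
    have h6 : Real.log (x * Real.Gamma x) ≤
        Real.log (Real.Gamma (x+s)) + (1-s) * Real.log (x+s) := by
      rw [Real.log_mul hx.ne' hGx.ne']; linarith
    calc x * Real.Gamma x = Real.exp (Real.log (x * Real.Gamma x)) :=
          (Real.exp_log (by positivity)).symm
    _ ≤ Real.exp (Real.log (Real.Gamma (x+s)) + (1-s) * Real.log (x+s)) := Real.exp_le_exp.2 h6
    _ = Real.Gamma (x+s) * (x+s) ^ (1-s) := by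
        rw [Real.exp_add, Real.exp_log hGxs, Real.rpow_def_of_pos hxs, mul_comm (1-s)]
  -- convert to ratio bounds
  have hub : Real.Gamma (x+s) / Real.Gamma x ≤ x ^ s := by
    rw [div_le_iff₀ hGx]; exact hupper
  have hlb : x ^ s - s * x ^ (s-1) ≤ Real.Gamma (x+s) / Real.Gamma x := by
    have hps : (0:ℝ) < (x+s) ^ (1-s) := Real.rpow_pos_of_pos hxs _
    have h7 : x / (x+s) ^ (1-s) ≤ Real.Gamma (x+s) / Real.Gamma x := by
      rw [div_le_div_iff₀ hps hGx]
      linarith [hlower]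
    have h8 : x ^ s - s * x ^ (s-1) ≤ x / (x+s) ^ (1-s) := by
      rw [le_div_iff₀ hps]
      have e1 : x ^ (s-1) * x = x ^ s := by
        rw [← Real.rpow_add_one hx.ne']; norm_num
      rcases le_or_gt (x ^ s - s * x ^ (s-1)) 0 with ht | ht
      · calc (x ^ s - s * x ^ (s-1)) * (x+s) ^ (1-s) ≤ 0 :=
              mul_nonpos_of_nonpos_of_nonneg ht hps.le
        _ ≤ x := hx.le
      · have hmono : (x+s) ^ (1-s) ≤ (x+s) * x ^ (-s) := by
          rw [show (1-s) = -s + 1 by ring, Real.rpow_add_one hxs.ne', mul_comm]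
          exact mul_le_mul_of_nonneg_left
            (Real.rpow_le_rpow_of_nonpos hx (by linarith) (by linarith)) hxs.le
        have hkey : (x ^ s - s * x ^ (s-1)) * (x+s) ≤ x * x ^ s := by
          nlinarith [mul_nonneg (mul_nonneg hs0 hs0) (Real.rpow_pos_of_pos hx (s-1)).le]
        have hxnegs : (0:ℝ) < x ^ (-s) := Real.rpow_pos_of_pos hx _
        calc (x ^ s - s * x ^ (s-1)) * (x+s) ^ (1-s)
            ≤ (x ^ s - s * x ^ (s-1)) * ((x+s) * x ^ (-s)) :=
              mul_le_mul_of_nonneg_left hmono ht.le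
        _ = ((x ^ s - s * x ^ (s-1)) * (x+s)) * x ^ (-s) := by ring
        _ ≤ (x * x ^ s) * x ^ (-s) := mul_le_mul_of_nonneg_right hkey hxnegs.le
        _ = x := by
            rw [mul_assoc, ← Real.rpow_add hx, add_neg_cancel, Real.rpow_zero, mul_one]
    linarith
  rw [abs_le]
  constructor <;> [linarith; nlinarith [Real.rpow_pos_of_pos hx (s-1), hub, hlb]]

private def GRPred (δ : ℝ) : Prop :=
  ∃ C x₀ : ℝ, 0 ≤ C ∧ 1 ≤ x₀ ∧ ∀ x : ℝ, x₀ ≤ x →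
    |Real.Gamma (x+δ) / Real.Gamma x - x ^ δ| ≤ C * x ^ (δ-1)

private lemma grpred_base {s : ℝ} (hs0 : 0 ≤ s) (hs1 : s ≤ 1) : GRPred s := by
  refine ⟨1, 1, zero_le_one, le_refl _, fun x hx => ?_⟩
  have := aux_gautschi (lt_of_lt_of_le zero_lt_one hx) hs0 hs1
  have hp : (0:ℝ) ≤ x ^ (s-1) := (Real.rpow_pos_of_pos (by linarith) _).le
  nlinarith

private lemma grpred_up {δ : ℝ} (h : GRPred δ) : GRPred (δ+1) := by
  obtain ⟨C, x₀, hC, hx₀, hb⟩ := h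
  refine ⟨C + abs δ * C + abs δ, max x₀ (abs δ + 1), by positivity, le_trans hx₀ (le_max_left _ _),
    fun x hx => ?_⟩
  have hxx₀ : x₀ ≤ x := le_trans (le_max_left _ _) hx
  have hxδ : |δ| + 1 ≤ x := le_trans (le_max_right _ _) hx
  have hx1 : (1:ℝ) ≤ x := le_trans hx₀ hxx₀
  have hxpos : (0:ℝ) < x := lt_of_lt_of_le zero_lt_one hx1
  have hxd : (0:ℝ) < x + δ := by
    have := neg_abs_le δ; linarith
  have hG : Real.Gamma (x + (δ+1)) = (x+δ) * Real.Gamma (x+δ) := by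
    rw [show x + (δ+1) = (x+δ) + 1 by ring, Real.Gamma_add_one hxd.ne']
  have hR := hb x hxx₀
  set R := Real.Gamma (x+δ) / Real.Gamma x with hRdef
  have hGx : Real.Gamma x ≠ 0 := (Real.Gamma_pos_of_pos hxpos).ne'
  have hsplit : Real.Gamma (x + (δ+1)) / Real.Gamma x = (x+δ) * R := by
    rw [hG, hRdef, mul_div_assoc]
  rw [hsplit]
  have e1 : x ^ δ * x = x ^ (δ+1) := by
    rw [← Real.rpow_add_one hxpos.ne']
  have e2 : x ^ (δ-1) * x = x ^ δ := by
    rw [← Real.rpow_add_one hxpos.ne']; norm_num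
  have e3 : x ^ ((δ+1)-1) = x ^ δ := by norm_num
  rw [e3]
  have hxd1 : (0:ℝ) ≤ x ^ (δ-1) := (Real.rpow_pos_of_pos hxpos _).le
  have hxd0 : (0:ℝ) ≤ x ^ δ := (Real.rpow_pos_of_pos hxpos _).le
  have hRb : |R - x ^ δ| ≤ C * x ^ (δ-1) := hR
  have key : (x+δ) * R - x ^ (δ+1) = x * (R - x ^ δ) + δ * (R - x ^ δ) + δ * x ^ δ := by
    rw [← e1]; ring
  rw [key]
  have h1 : |x * (R - x ^ δ)| ≤ C * x ^ δ := by
    rw [abs_mul, abs_of_pos hxpos]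
    calc x * |R - x ^ δ| ≤ x * (C * x ^ (δ-1)) :=
          mul_le_mul_of_nonneg_left hRb hxpos.le
    _ = C * (x ^ (δ-1) * x) := by ring
    _ = C * x ^ δ := by rw [e2]
  have h2 : |δ * (R - x ^ δ)| ≤ |δ| * (C * x ^ (δ-1)) := by
    rw [abs_mul]; exact mul_le_mul_of_nonneg_left hRb (abs_nonneg _)
  have h3 : |δ * x ^ δ| ≤ |δ| * x ^ δ := by
    rw [abs_mul, abs_of_nonneg hxd0]
  have hmono : x ^ (δ-1) ≤ x ^ δ := Real.rpow_le_rpow_of_exponent_le hx1 (by linarith)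
  calc |x * (R - x ^ δ) + δ * (R - x ^ δ) + δ * x ^ δ|
      ≤ |x * (R - x ^ δ)| + |δ * (R - x ^ δ)| + |δ * x ^ δ| := by
        exact (abs_add_le _ _).trans (add_le_add_left (abs_add_le _ _) _)
  _ ≤ C * x ^ δ + |δ| * (C * x ^ (δ-1)) + |δ| * x ^ δ := by
        exact add_le_add (add_le_add h1 h2) h3
  _ ≤ (C + |δ| * C + |δ|) * x ^ δ := by
        nlinarith [mul_nonneg (mul_nonneg (abs_nonneg δ) hC) (sub_nonneg.2 hmono)]

private lemma grpred_down {δ : ℝ} (h : GRPred δ) : GRPred (δ-1) := by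
  obtain ⟨C, x₀, hC, hx₀, hb⟩ := h
  refine ⟨2*(C + abs (δ-1)), max x₀ (2 * abs δ + 2), by positivity, le_trans hx₀ (le_max_left _ _),
    fun x hx => ?_⟩
  have hxx₀ : x₀ ≤ x := le_trans (le_max_left _ _) hx
  have hxδ : 2*|δ| + 2 ≤ x := le_trans (le_max_right _ _) hx
  have hx1 : (1:ℝ) ≤ x := le_trans hx₀ hxx₀
  have hxpos : (0:ℝ) < x := lt_of_lt_of_le zero_lt_one hx1
  have habs := abs_le.1 (le_refl |δ|)
  have hd1 : |δ - 1| ≤ |δ| + 1 := (abs_sub _ _).trans (by simp)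
  have hxd : x/2 ≤ x + δ - 1 := by
    have := neg_abs_le δ; linarith
  have hxdpos : (0:ℝ) < x + δ - 1 := by linarith
  have hG : Real.Gamma (x + δ) = (x+δ-1) * Real.Gamma (x+(δ-1)) := by
    rw [show x + δ = (x+(δ-1)) + 1 by ring, Real.Gamma_add_one (by linarith : x+(δ-1) ≠ 0)]
    ring_nf
  have hR := hb x hxx₀
  have hGx : (0:ℝ) < Real.Gamma x := Real.Gamma_pos_of_pos hxpos
  set R' := Real.Gamma (x+(δ-1)) / Real.Gamma x with hRdef
  have hsplit : Real.Gamma (x + δ) / Real.Gamma x = (x+δ-1) * R' := by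
    rw [hG, hRdef, mul_div_assoc]
  rw [hsplit] at hR
  have e2 : x ^ (δ-1) * x = x ^ δ := by
    rw [← Real.rpow_add_one hxpos.ne']; norm_num
  have e3 : x ^ (δ-1-1) * x = x ^ (δ-1) := by
    rw [← Real.rpow_add_one hxpos.ne']; norm_num
  have hxd2 : (0:ℝ) < x ^ (δ-1-1) := Real.rpow_pos_of_pos hxpos _
  have hxd1 : (0:ℝ) < x ^ (δ-1) := Real.rpow_pos_of_pos hxpos _
  -- |(x+δ-1) * R' - x^δ| ≤ C x^{δ-1};  (x+δ-1) x^{δ-1} = x^δ + (δ-1) x^{δ-1}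
  have key : (x+δ-1) * (R' - x ^ (δ-1)) = ((x+δ-1) * R' - x ^ δ) - (δ-1) * x ^ (δ-1) := by
    rw [← e2]; ring
  have hbound : |(x+δ-1) * (R' - x ^ (δ-1))| ≤ (C + |δ-1|) * x ^ (δ-1) := by
    rw [key]
    calc |((x+δ-1) * R' - x ^ δ) - (δ-1) * x ^ (δ-1)|
        ≤ |(x+δ-1) * R' - x ^ δ| + |(δ-1) * x ^ (δ-1)| := abs_sub _ _
    _ ≤ C * x ^ (δ-1) + |δ-1| * x ^ (δ-1) := by
        refine add_le_add hR ?_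
        rw [abs_mul, abs_of_pos hxd1]
    _ = (C + |δ-1|) * x ^ (δ-1) := by ring
  have hfinal : |R' - x ^ (δ-1)| ≤ (C + |δ-1|) * x ^ (δ-1) / (x+δ-1) := by
    rw [abs_mul, abs_of_pos hxdpos] at hbound
    rw [le_div_iff₀ hxdpos, mul_comm]
    exact hbound
  refine hfinal.trans ?_
  rw [div_le_iff₀ hxdpos, ← e3]
  have h2 : x/2 * x ^ (δ-1-1) ≤ (x+δ-1) * x ^ (δ-1-1) :=
    mul_le_mul_of_nonneg_right hxd hxd2.le
  nlinarith [mul_nonneg hC hxd2.le, mul_nonneg (abs_nonneg (δ-1)) hxd2.le]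

private lemma grpred_all (δ : ℝ) : GRPred δ := by
  have base : GRPred (Int.fract δ) := grpred_base (Int.fract_nonneg δ) (Int.fract_lt_one δ).le
  have hk : ∀ k : ℤ, GRPred (Int.fract δ + k) := by
    intro k
    induction k using Int.induction_on with
    | zero => simpa using base
    | succ i ih =>
      have h := grpred_up ih
      convert h using 1
      push_cast; ring
    | pred i ih =>
      have h := grpred_down ih
      convert h using 1
      push_cast; ring
  have := hk ⌊δ⌋
  rwa [Int.fract_add_floor δ] at this

private lemma prod_gamma (A : ℝ) (hA : 0 ≤ A) (n : ℕ) :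
    Real.Gamma ((n:ℝ)+1+A) = Real.Gamma (1+A) * ∏ j ∈ Finset.range n, ((j:ℝ)+1+A) := by
  induction n with
  | zero => simp
  | succ n ih =>
    rw [Finset.prod_range_succ, show ((n+1:ℕ):ℝ)+1+A = ((n:ℝ)+1+A) + 1 by push_cast; ring,
      Real.Gamma_add_one (by positivity : (n:ℝ)+1+A ≠ 0), ih]
    ring

private lemma prod_asymp (A B : ℝ) (hA : 0 ≤ A) (hB : 0 ≤ B) :
    ∃ (C : ℝ) (N : ℕ), 0 ≤ C ∧ 1 ≤ N ∧ ∀ n : ℕ, N ≤ n →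
      |(∏ j ∈ Finset.range n, (((j:ℝ)+1+A)/((j:ℝ)+1+B))) -
        (Real.Gamma (1+B)/Real.Gamma (1+A)) * (n:ℝ) ^ (A-B)| ≤ C * (n:ℝ) ^ (A-B-1) := by
  set δ := A - B with hδ
  obtain ⟨C₁, x₀, hC₁, hx₀, hbd⟩ := grpred_all δ
  obtain ⟨K, hK, hKb⟩ := aux_rpow_near_one δ
  obtain ⟨K₂, hK₂, hK₂b⟩ := aux_rpow_near_one (δ-1)
  have hGA : 0 < Real.Gamma (1+A) := Real.Gamma_pos_of_pos (by linarith)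
  have hGB : 0 < Real.Gamma (1+B) := Real.Gamma_pos_of_pos (by linarith)
  set L := Real.Gamma (1+B)/Real.Gamma (1+A) with hL
  have hLpos : 0 < L := div_pos hGB hGA
  set c := 1 + B with hc
  refine ⟨L * (C₁ * (1+K₂) + K * c), ⌈max x₀ c⌉₊ + 1, by positivity, le_add_self, fun n hn => ?_⟩
  have hn0 : 0 < n := lt_of_lt_of_le (Nat.succ_pos _) hn
  have hnc : c ≤ (n:ℝ) := by
    calc c ≤ max x₀ c := le_max_right _ _
    _ ≤ (⌈max x₀ c⌉₊ : ℝ) := Nat.le_ceil _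
    _ ≤ (n:ℝ) := by exact_mod_cast le_trans (Nat.le_succ _) hn
  have hnx₀ : x₀ ≤ (n:ℝ) := by
    calc x₀ ≤ max x₀ c := le_max_left _ _
    _ ≤ (⌈max x₀ c⌉₊ : ℝ) := Nat.le_ceil _
    _ ≤ (n:ℝ) := by exact_mod_cast le_trans (Nat.le_succ _) hn
  have hnpos : (0:ℝ) < n := by exact_mod_cast hn0
  have hn1 : (1:ℝ) ≤ n := le_trans hx₀ hnx₀
  -- product = L * Γ(y+δ)/Γ(y) with y = n + c
  set y := (n:ℝ) + c with hy
  have hypos : (0:ℝ) < y := by positivity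
  have hyx₀ : x₀ ≤ y := by
    have : (0:ℝ) < c := by linarith
    linarith
  have hGy : 0 < Real.Gamma y := Real.Gamma_pos_of_pos hypos
  have hprod : (∏ j ∈ Finset.range n, (((j:ℝ)+1+A)/((j:ℝ)+1+B))) =
      L * (Real.Gamma (y+δ) / Real.Gamma y) := by
    rw [Finset.prod_div_distrib]
    have h1 : (∏ j ∈ Finset.range n, ((j:ℝ)+1+A)) = Real.Gamma ((n:ℝ)+1+A) / Real.Gamma (1+A) := by
      rw [prod_gamma A hA n]; field_simp
    have h2 : (∏ j ∈ Finset.range n, ((j:ℝ)+1+B)) = Real.Gamma ((n:ℝ)+1+B) / Real.Gamma (1+B) := by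
      rw [prod_gamma B hB n]; field_simp
    rw [h1, h2, hL]
    have hyδ : y + δ = (n:ℝ)+1+A := by rw [hy, hc, hδ]; ring
    have hyB : y = (n:ℝ)+1+B := by rw [hy, hc]; ring
    rw [hyδ, ← hyB]
    have hGnB : 0 < Real.Gamma ((n:ℝ)+1+B) := by rw [← hyB]; exact hGy
    field_simp
    ring
  rw [hprod]
  have hsplit : L * (Real.Gamma (y+δ) / Real.Gamma y) - L * (n:ℝ) ^ δ =
      L * (Real.Gamma (y+δ) / Real.Gamma y - y ^ δ) + L * (y ^ δ - (n:ℝ) ^ δ) := by ring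
  rw [hsplit]
  have hu : c / (n:ℝ) ≤ 1 := by rw [div_le_one hnpos]; exact hnc
  have hu0 : 0 ≤ c / (n:ℝ) := by positivity
  have hyn : y = (n:ℝ) * (1 + c/(n:ℝ)) := by field_simp; exact hy
  have hnd : ((n:ℝ)) ^ (δ-1) = (n:ℝ) ^ δ / (n:ℝ) := by
    rw [eq_div_iff hnpos.ne', ← Real.rpow_add_one hnpos.ne']; norm_num
  have hnδpos : (0:ℝ) < (n:ℝ) ^ δ := Real.rpow_pos_of_pos hnpos _
  have hnd1pos : (0:ℝ) < (n:ℝ) ^ (δ-1) := Real.rpow_pos_of_pos hnpos _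
  -- bound |y^δ - n^δ|
  have hb1 : |y ^ δ - (n:ℝ) ^ δ| ≤ K * c * (n:ℝ) ^ (δ-1) := by
    have : y ^ δ = (n:ℝ) ^ δ * (1 + c/(n:ℝ)) ^ δ := by
      rw [hyn, Real.mul_rpow hnpos.le (by positivity)]
    rw [this]
    have h := hKb (c/(n:ℝ)) hu0 hu
    calc |(n:ℝ) ^ δ * (1 + c/(n:ℝ)) ^ δ - (n:ℝ) ^ δ| = (n:ℝ) ^ δ * |(1 + c/(n:ℝ)) ^ δ - 1| := by
          rw [show (n:ℝ) ^ δ * (1 + c/(n:ℝ)) ^ δ - (n:ℝ) ^ δ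
              = (n:ℝ) ^ δ * ((1 + c/(n:ℝ)) ^ δ - 1) by ring, abs_mul, abs_of_pos hnδpos]
    _ ≤ (n:ℝ) ^ δ * (K * (c/(n:ℝ))) := mul_le_mul_of_nonneg_left h hnδpos.le
    _ = K * c * ((n:ℝ) ^ δ / (n:ℝ)) := by ring
    _ = K * c * (n:ℝ) ^ (δ-1) := by rw [← hnd]
  -- bound |Γ ratio - y^δ|
  have hb2 : |Real.Gamma (y+δ) / Real.Gamma y - y ^ δ| ≤ C₁ * (1+K₂) * (n:ℝ) ^ (δ-1) := by
    refine (hbd y hyx₀).trans ?_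
    have hyd : y ^ (δ-1) = (n:ℝ) ^ (δ-1) * (1 + c/(n:ℝ)) ^ (δ-1) := by
      rw [hyn, Real.mul_rpow hnpos.le (by positivity)]
    have h := hK₂b (c/(n:ℝ)) hu0 hu
    have h2 : (1 + c/(n:ℝ)) ^ (δ-1) ≤ 1 + K₂ := by
      have := abs_le.1 h
      nlinarith [mul_nonneg hK₂ hu0]
    rw [hyd]
    calc C₁ * ((n:ℝ) ^ (δ-1) * (1 + c/(n:ℝ)) ^ (δ-1)) ≤ C₁ * ((n:ℝ) ^ (δ-1) * (1+K₂)) := by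
          apply mul_le_mul_of_nonneg_left _ hC₁
          exact mul_le_mul_of_nonneg_left h2 hnd1pos.le
    _ = C₁ * (1+K₂) * (n:ℝ) ^ (δ-1) := by ring
  calc |L * (Real.Gamma (y+δ) / Real.Gamma y - y ^ δ) + L * (y ^ δ - (n:ℝ) ^ δ)|
      ≤ |L * (Real.Gamma (y+δ) / Real.Gamma y - y ^ δ)| + |L * (y ^ δ - (n:ℝ) ^ δ)| := abs_add_le _ _
  _ = L * |Real.Gamma (y+δ) / Real.Gamma y - y ^ δ| + L * |y ^ δ - (n:ℝ) ^ δ| := by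
      rw [abs_mul, abs_mul, abs_of_pos hLpos]
  _ ≤ L * (C₁ * (1+K₂) * (n:ℝ) ^ (δ-1)) + L * (K * c * (n:ℝ) ^ (δ-1)) :=
      add_le_add (mul_le_mul_of_nonneg_left hb2 hLpos.le) (mul_le_mul_of_nonneg_left hb1 hLpos.le)
  _ = L * (C₁ * (1+K₂) + K * c) * (n:ℝ) ^ (δ-1) := by ring

set_option maxHeartbeats 1000000 in
/-- **Corollary 6.3 (asymptotics of the mean).** With `τ₁ = -β/α` and `τ₂ = γ/α`:
if `β > 0` then `E[X_n] = γ'/β + O(n^{τ₁})`; if `β < 0` then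
`E[X_n] = (c₁/c₀ - γ'/β) (Γ(1+τ₂)/Γ(1+τ₂+τ₁)) n^{τ₁} + O(1 + n^{τ₁-1})`. -/
theorem factorial_moment_mean_asymptotics
    (α β β' γ γ' c₀ c₁ : ℝ)
    (hα : 0 < α) (hγ : 0 ≤ γ) (hc₀ : c₀ ≠ 0) (hβ : β ≠ 0)
    (P : ℕ → Polynomial ℝ)
    (hP0 : P 0 = C c₀ + C c₁ * (X - 1))
    (hrec : ∀ n : ℕ, P (n + 1) =
      (C (α * ((n : ℝ) + 1) + γ) + C γ' * (X - 1)) * P n +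
        (C β + C β' * (X - 1)) * (1 - X) * derivative (P n))
    (Q : ℕ → ℕ → ℝ)
    (hQ : ∀ n m, Q n m =
      iteratedDeriv m (fun t : ℝ => (P n).eval (1 + t) / (P n).eval 1) 0) :
    (0 < β →
      (fun n : ℕ => Q n 1 - γ' / β) =O[atTop] (fun n : ℕ => (n : ℝ) ^ (-β / α))) ∧
    (β < 0 →
      (fun n : ℕ => Q n 1 -
          (c₁ / c₀ - γ' / β) * (Real.Gamma (1 + γ / α) / Real.Gamma (1 + γ / α + -β / α)) *
            (n : ℝ) ^ (-β / α))
        =O[atTop] (fun n : ℕ => 1 + (n : ℝ) ^ (-β / α - 1))) := by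
  have hQval : ∀ n, Q n 1 = γ' / β + (c₁/c₀ - γ'/β) *
      ∏ j ∈ Finset.range n, ((α*((j:ℝ)+1)+γ-β)/(α*((j:ℝ)+1)+γ)) := by
    have hS : ∀ n : ℕ, (0:ℝ) < α*((n:ℝ)+1)+γ := by
      intro n
      have : (0:ℝ) < α * ((n:ℝ)+1) := by positivity
      linarith
    have hE : ∀ n, (P n).eval 1 = c₀ * ∏ j ∈ Finset.range n, (α*((j:ℝ)+1)+γ) := by
      intro n
      induction n with
      | zero => simp [hP0]
      | succ n ih =>
        rw [hrec n]
        simp only [eval_add, eval_mul, eval_sub, eval_C, eval_X, eval_one]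
        rw [ih, Finset.prod_range_succ]
        push_cast
        ring
    have hEne : ∀ n, (P n).eval 1 ≠ 0 := by
      intro n
      rw [hE n]
      apply mul_ne_zero hc₀
      exact (Finset.prod_pos fun j _ => hS j).ne'
    have hEstep : ∀ n, (P (n+1)).eval 1 = (α*((n:ℝ)+1)+γ) * (P n).eval 1 := by
      intro n
      rw [hE (n+1), hE n, Finset.prod_range_succ]
      push_cast
      ring
    have hD : ∀ n, (derivative (P (n+1))).eval 1 =
        γ' * (P n).eval 1 + (α*((n:ℝ)+1)+γ-β) * (derivative (P n)).eval 1 := by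
      intro n
      rw [hrec n]
      simp only [derivative_add, derivative_mul, derivative_C, derivative_X, derivative_one,
        derivative_sub, eval_add, eval_mul, eval_sub, eval_C, eval_X, eval_one, eval_zero]
      ring
    have hD0 : (derivative (P 0)).eval 1 = c₁ := by
      rw [hP0]
      simp
    have key : ∀ n, (derivative (P n)).eval 1 =
        (P n).eval 1 * (γ'/β + (c₁/c₀ - γ'/β) *
          ∏ j ∈ Finset.range n, ((α*((j:ℝ)+1)+γ-β)/(α*((j:ℝ)+1)+γ))) := by
      intro n
      induction n with
      | zero =>
        rw [hD0, hP0]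
        simp only [Finset.range_zero, Finset.prod_empty, mul_one]
        simp only [eval_add, eval_mul, eval_sub, eval_C, eval_X, eval_one]
        field_simp
        ring
      | succ n ih =>
        rw [hD n, ih, hEstep n, Finset.prod_range_succ]
        have hSn := hS n
        have hprodne : ∀ j ∈ Finset.range n, ((α*((j:ℝ)+1)+γ) : ℝ) ≠ 0 := fun j _ => (hS j).ne'
        field_simp
        ring
    intro n
    rw [hQ n 1, iteratedDeriv_one]
    have hd : HasDerivAt (fun t : ℝ => (P n).eval (1+t)) ((derivative (P n)).eval 1) 0 := by
      have h1 := (P n).hasDerivAt ((1:ℝ)+0)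
      have h2 : HasDerivAt (fun t : ℝ => 1+t) 1 0 := (hasDerivAt_id 0).const_add 1
      have := h1.comp 0 h2
      simpa [Function.comp_def] using this
    have : deriv (fun t : ℝ => (P n).eval (1+t) / (P n).eval 1) 0 =
        (derivative (P n)).eval 1 / (P n).eval 1 := (hd.div_const _).deriv
    rw [this, key n]
    exact mul_div_cancel_left₀ _ (hEne n)
  -- change of variables in the product
  set a := (γ - β)/α with ha
  set b := γ/α with hb
  have hb0 : 0 ≤ b := by positivity
  have hτ : a - b = -β/α := by rw [ha, hb]; ring
  have hfac : ∀ j : ℕ, (α*((j:ℝ)+1)+γ-β)/(α*((j:ℝ)+1)+γ) = ((j:ℝ)+1+a)/((j:ℝ)+1+b) := by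
    intro j
    have h1 : (0:ℝ) < α*((j:ℝ)+1)+γ := by positivity
    have h2 : (0:ℝ) < (j:ℝ)+1+b := by positivity
    rw [div_eq_div_iff h1.ne' h2.ne', ha, hb]
    field_simp
    ring
  have hQval2 : ∀ n, Q n 1 = γ' / β + (c₁/c₀ - γ'/β) *
      ∏ j ∈ Finset.range n, (((j:ℝ)+1+a)/((j:ℝ)+1+b)) := by
    intro n
    rw [hQval n]
    congr 2
    exact Finset.prod_congr rfl fun j _ => hfac j
  set K := c₁/c₀ - γ'/β with hK
  clear_value a b K
  constructor
  · -- case β > 0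
    intro hβpos
    have hτneg : -β/α ≤ 0 := by
      rw [neg_div]
      have : 0 ≤ β/α := by positivity
      linarith
    set N₀ : ℕ := ⌈|a|⌉₊ + 1 with hN₀
    have hN₀a : |a| + 1 ≤ (N₀:ℝ) := by
      rw [hN₀]; push_cast; linarith [Nat.le_ceil |a|]
    have haN : 0 ≤ a + (N₀:ℝ) := by linarith [neg_abs_le a]
    have hbN : 0 ≤ b + (N₀:ℝ) := by
      have : (0:ℝ) ≤ (N₀:ℝ) := Nat.cast_nonneg _
      linarith
    obtain ⟨C, N, hC, hN1, hbd⟩ := prod_asymp (a + N₀) (b + N₀) haN hbN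
    have hδeq : (a + (N₀:ℝ)) - (b + (N₀:ℝ)) = -β/α := by rw [← hτ]; ring
    set L := Real.Gamma (1 + (b+(N₀:ℝ))) / Real.Gamma (1 + (a+(N₀:ℝ))) with hL
    set p0 := ∏ j ∈ Finset.range N₀, (((j:ℝ)+1+a)/((j:ℝ)+1+b)) with hp0
    rw [isBigO_iff]
    set τ := -β/α with hτdef
    refine ⟨|K| * |p0| * (|L| + C) * (2:ℝ)^(-τ), ?_⟩
    filter_upwards [eventually_ge_atTop (2*N₀ + N + 1)] with n hn
    have hnN₀ : N₀ ≤ n := by omega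
    set m := n - N₀ with hmdef
    have hmN : N ≤ m := by omega
    have hm1 : 1 ≤ m := by omega
    have h2N : 2*N₀ ≤ n := by omega
    have hm1' : (1:ℝ) ≤ (m:ℝ) := by exact_mod_cast hm1
    have hmpos : (0:ℝ) < (m:ℝ) := by linarith
    have hn0 : (0:ℝ) < (n:ℝ) := by
      have : 0 < n := by omega
      exact_mod_cast this
    have hneq : n = N₀ + m := by omega
    clear_value N₀ τ L p0 m
    have hsplit : ∏ j ∈ Finset.range n, (((j:ℝ)+1+a)/((j:ℝ)+1+b)) =
        p0 * ∏ j ∈ Finset.range m, (((j:ℝ)+1+(a+(N₀:ℝ)))/((j:ℝ)+1+(b+(N₀:ℝ)))) := by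
      rw [hneq, Finset.prod_range_add, hp0]
      congr 1
      refine Finset.prod_congr rfl fun j _ => ?_
      congr 1 <;> push_cast <;> ring
    have hbdm := hbd m hmN
    rw [hδeq] at hbdm
    have hmono : (m:ℝ) ^ (τ - 1) ≤ (m:ℝ) ^ τ :=
      Real.rpow_le_rpow_of_exponent_le hm1' (by linarith)
    have hXb : |∏ j ∈ Finset.range m, (((j:ℝ)+1+(a+(N₀:ℝ)))/((j:ℝ)+1+(b+(N₀:ℝ))))| ≤
        (|L| + C) * (m:ℝ) ^ τ := by
      have h1 : |∏ j ∈ Finset.range m, (((j:ℝ)+1+(a+(N₀:ℝ)))/((j:ℝ)+1+(b+(N₀:ℝ))))| ≤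
          |L * (m:ℝ) ^ τ| + C * (m:ℝ) ^ (τ-1) := by
        have := abs_sub_abs_le_abs_sub
          (∏ j ∈ Finset.range m, (((j:ℝ)+1+(a+(N₀:ℝ)))/((j:ℝ)+1+(b+(N₀:ℝ))))) (L * (m:ℝ) ^ τ)
        linarith [hbdm]
      have h2 : |L * (m:ℝ) ^ τ| = |L| * (m:ℝ) ^ τ := by
        rw [abs_mul, abs_of_pos (Real.rpow_pos_of_pos hmpos τ)]
      rw [h2] at h1
      nlinarith [mul_nonneg hC (Real.rpow_pos_of_pos hmpos (τ-1)).le]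
    -- (m:ℝ)^τ ≤ 2^(-τ) * n^τ
    have hmn : (n:ℝ)/2 ≤ (m:ℝ) := by
      have : ((m:ℕ):ℝ) = (n:ℝ) - (N₀:ℝ) := by
        rw [hmdef, Nat.cast_sub hnN₀]
      rw [this]
      have h2N' : (2:ℝ) * (N₀:ℝ) ≤ (n:ℝ) := by exact_mod_cast h2N
      linarith
    have hmτ : (m:ℝ) ^ τ ≤ (n:ℝ) ^ τ * (2:ℝ)^(-τ) := by
      have h1 : (m:ℝ) ^ τ ≤ ((n:ℝ)/2) ^ τ :=
        Real.rpow_le_rpow_of_nonpos (by linarith) hmn hτneg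
      have h2 : ((n:ℝ)/2) ^ τ = (n:ℝ)^τ * (2:ℝ)^(-τ) := by
        rw [Real.div_rpow hn0.le (by norm_num : (0:ℝ) ≤ 2),
          Real.rpow_neg (by norm_num : (0:ℝ) ≤ 2), div_eq_mul_inv]
      linarith [h1, h2.le, h2.ge]
    have hgoal : Q n 1 - γ'/β = K * (p0 * ∏ j ∈ Finset.range m,
        (((j:ℝ)+1+(a+(N₀:ℝ)))/((j:ℝ)+1+(b+(N₀:ℝ))))) := by
      rw [hQval2 n, hsplit]; ring
    rw [Real.norm_eq_abs, Real.norm_eq_abs, hgoal]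
    have hnτ : (0:ℝ) < (n:ℝ) ^ τ := Real.rpow_pos_of_pos hn0 τ
    have h2τ : (0:ℝ) < (2:ℝ) ^ (-τ) := Real.rpow_pos_of_pos (by norm_num) _
    rw [abs_mul, abs_mul, abs_of_pos hnτ]
    calc |K| * (|p0| * |∏ j ∈ Finset.range m, (((j:ℝ)+1+(a+(N₀:ℝ)))/((j:ℝ)+1+(b+(N₀:ℝ))))|)
        ≤ |K| * (|p0| * ((|L| + C) * (m:ℝ) ^ τ)) := by
          apply mul_le_mul_of_nonneg_left _ (abs_nonneg K)
          exact mul_le_mul_of_nonneg_left hXb (abs_nonneg p0)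
    _ ≤ |K| * (|p0| * ((|L| + C) * ((n:ℝ) ^ τ * (2:ℝ)^(-τ)))) := by
          apply mul_le_mul_of_nonneg_left _ (abs_nonneg K)
          apply mul_le_mul_of_nonneg_left _ (abs_nonneg p0)
          exact mul_le_mul_of_nonneg_left hmτ (add_nonneg (abs_nonneg L) hC)
    _ = |K| * |p0| * (|L| + C) * (2:ℝ)^(-τ) * (n:ℝ) ^ τ := by ring
  · -- case β < 0
    intro hβneg
    have ha0 : 0 ≤ a := by
      rw [ha]
      apply div_nonneg _ hα.le
      linarith
    obtain ⟨C, N, hC, hN1, hbd⟩ := prod_asymp a b ha0 hb0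
    have hGeq : Real.Gamma (1 + b + -β/α) = Real.Gamma (1 + a) := by
      congr 1
      rw [ha, hb]
      field_simp
      ring
    set L := Real.Gamma (1 + b) / Real.Gamma (1 + a) with hL
    clear_value L
    rw [isBigO_iff]
    refine ⟨|γ'/β| + |K| * C, ?_⟩
    filter_upwards [eventually_ge_atTop (max N 1)] with n hn
    have hnN : N ≤ n := le_trans (le_max_left _ _) hn
    have hn1 : 1 ≤ n := le_trans (le_max_right _ _) hn
    have hn1' : (1:ℝ) ≤ (n:ℝ) := by exact_mod_cast hn1
    have hnpos : (0:ℝ) < (n:ℝ) := by linarith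
    have hbdn := hbd n hnN
    have hexpand : Q n 1 - K * (Real.Gamma (1 + b) / Real.Gamma (1 + b + -β/α)) * (n:ℝ)^(-β/α)
        = γ'/β + K * ((∏ j ∈ Finset.range n, (((j:ℝ)+1+a)/((j:ℝ)+1+b))) - L * (n:ℝ)^(a-b)) := by
      rw [hQval2 n, hGeq, hL, hτ]
      ring
    rw [Real.norm_eq_abs, Real.norm_eq_abs, hexpand]
    have hτ1 : a - b - 1 = -β/α - 1 := by rw [hτ]
    rw [hτ1] at hbdn
    have hpow : (0:ℝ) < (n:ℝ) ^ (-β/α - 1) := Real.rpow_pos_of_pos hnpos _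
    have h1 : |K * ((∏ j ∈ Finset.range n, (((j:ℝ)+1+a)/((j:ℝ)+1+b))) - L * (n:ℝ)^(a-b))|
        ≤ |K| * (C * (n:ℝ)^(-β/α - 1)) := by
      rw [abs_mul]
      exact mul_le_mul_of_nonneg_left hbdn (abs_nonneg K)
    have h2 : |1 + (n:ℝ) ^ (-β/α - 1)| = 1 + (n:ℝ) ^ (-β/α - 1) := by
      rw [abs_of_pos (by linarith)]
    rw [h2]
    calc |γ'/β + K * ((∏ j ∈ Finset.range n, (((j:ℝ)+1+a)/((j:ℝ)+1+b))) - L * (n:ℝ)^(a-b))|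
        ≤ |γ'/β| + |K| * (C * (n:ℝ)^(-β/α - 1)) := by
          have h3 := abs_add_le (γ'/β)
            (K * ((∏ j ∈ Finset.range n, (((j:ℝ)+1+a)/((j:ℝ)+1+b))) - L * (n:ℝ)^(a-b)))
          linarith [h1, h3]
    _ ≤ (|γ'/β| + |K| * C) * (1 + (n:ℝ) ^ (-β/α - 1)) := by
        nlinarith [abs_nonneg (γ'/β), abs_nonneg K, mul_nonneg (abs_nonneg K) hC, hpow.le,
          mul_nonneg (mul_nonneg (abs_nonneg K) hC) hpow.le]
end

section
/- Let m ≥ 1 be an integer, let τ₁ < 0 and τ₂ ≥ 0 be reals, let α > 0, and set β := −α·τ₁ > 0. Suppose the real sequence (x_n) satisfies x_n = (1 + m·τ₁/(n+τ₂))·x_{n−1} + y_n/(α·(n+τ₂)) for all n ≥ 1, where (y_n) is a real sequence with y_n → K as n → ∞. Then x_n → K/(m·β) as n → ∞. -/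
open Filter Topology

private lemma sum_inv_tendsto_aux (τ₂ : ℝ) (hτ₂ : 0 ≤ τ₂) (N : ℕ) :
    Tendsto (fun n => ∑ k ∈ Finset.Ico N n, (1 / ((k:ℝ)+1+τ₂))) atTop atTop := by
  have h1 : Tendsto (fun n => ∑ k ∈ Finset.range n, (1 / ((k:ℝ)+1))) atTop atTop :=
    Real.tendsto_sum_range_one_div_nat_succ_atTop
  have h2 : Tendsto (fun n => (1/(1+τ₂)) *
      ((∑ k ∈ Finset.range n, (1 / ((k:ℝ)+1))) - ∑ k ∈ Finset.range N, (1 / ((k:ℝ)+1))))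
      atTop atTop := by
    apply Tendsto.const_mul_atTop (by positivity)
    exact tendsto_atTop_add_const_right _ _ h1
  apply tendsto_atTop_mono' atTop _ h2
  filter_upwards [eventually_ge_atTop N] with n hn
  rw [← Finset.sum_Ico_eq_sub _ hn, Finset.mul_sum]
  apply Finset.sum_le_sum
  intro k _
  have hk : (0:ℝ) ≤ (k:ℝ) := Nat.cast_nonneg k
  rw [div_mul_div_comm, one_mul]
  rw [div_le_div_iff₀ (by positivity) (by positivity)]
  nlinarith

private lemma prod_tendsto_zero_aux (c τ₂ : ℝ) (hc : 0 < c) (hτ₂ : 0 ≤ τ₂) (N : ℕ)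
    (hN : ∀ k, N ≤ k → c / ((k:ℝ)+1+τ₂) ≤ 1) :
    Tendsto (fun n => ∏ k ∈ Finset.Ico N n, (1 - c/((k:ℝ)+1+τ₂))) atTop (𝓝 0) := by
  have hS := sum_inv_tendsto_aux τ₂ hτ₂ N
  have hexp : Tendsto (fun n => Real.exp (-(c * ∑ k ∈ Finset.Ico N n, (1/((k:ℝ)+1+τ₂)))))
      atTop (𝓝 0) := by
    apply Real.tendsto_exp_atBot.comp
    exact tendsto_neg_atTop_atBot.comp (hS.const_mul_atTop hc)
  apply squeeze_zero (g := fun n => Real.exp (-(c * ∑ k ∈ Finset.Ico N n, (1/((k:ℝ)+1+τ₂))))) _ _ hexp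
  · intro n
    apply Finset.prod_nonneg
    intro k hk
    have := hN k (Finset.mem_Ico.mp hk).1
    linarith
  · intro n
    have : (∏ k ∈ Finset.Ico N n, (1 - c/((k:ℝ)+1+τ₂))) ≤
        ∏ k ∈ Finset.Ico N n, Real.exp (-(c/((k:ℝ)+1+τ₂))) := by
      apply Finset.prod_le_prod
      · intro k hk
        have := hN k (Finset.mem_Ico.mp hk).1
        linarith
      · intro k _
        have := Real.add_one_le_exp (-(c/((k:ℝ)+1+τ₂)))
        linarith
    refine this.trans (le_of_eq ?_)
    rw [← Real.exp_sum]
    congr 1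
    rw [Finset.mul_sum, ← Finset.sum_neg_distrib]
    apply Finset.sum_congr rfl
    intro k _
    rw [mul_one_div]

private lemma transfer_aux (c α L K τ₂ : ℝ) (hc : 0 < c) (hα : 0 < α) (hτ₂ : 0 ≤ τ₂)
    (x y : ℕ → ℝ) (hcL : c * L = K / α)
    (hrec : ∀ n : ℕ, x (n+1) = (1 - c/((n:ℝ)+1+τ₂)) * x n + y (n+1)/(α*((n:ℝ)+1+τ₂)))
    (hy : Tendsto y atTop (𝓝 K)) : Tendsto x atTop (𝓝 L) := by
  have hspos : ∀ n : ℕ, (0:ℝ) < (n:ℝ)+1+τ₂ := fun n => by positivity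
  have herec : ∀ n : ℕ, x (n+1) - L =
      (1 - c/((n:ℝ)+1+τ₂)) * (x n - L) + (y (n+1) - K)/(α*((n:ℝ)+1+τ₂)) := by
    intro n
    rw [hrec n]
    simp only [div_mul_eq_div_div]
    linear_combination (-(1/((n:ℝ)+1+τ₂))) * hcL
  have he0 : Tendsto (fun n => x n - L) atTop (𝓝 0) := by
    rw [NormedAddCommGroup.tendsto_nhds_zero]
    intro ε hε
    obtain ⟨N₁, hN₁⟩ := Metric.tendsto_atTop.mp hy (α*c*ε/4) (by positivity)
    set N : ℕ := max N₁ ⌈c⌉₊ with hN_def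
    have hfac : ∀ k, N ≤ k → c / ((k:ℝ)+1+τ₂) ≤ 1 := by
      intro k hk
      have h1 : c ≤ (k:ℝ) := Nat.ceil_le.mp (le_trans (le_max_right N₁ ⌈c⌉₊) hk)
      rw [div_le_one (hspos k)]
      linarith
    have hkey : ∀ n, N ≤ n → |x (n+1) - L| - ε/4 ≤
        (1 - c/((n:ℝ)+1+τ₂)) * (|x n - L| - ε/4) := by
      intro n hn
      have hs := hspos n
      have hf := hfac n hn
      have hf0 : 0 ≤ 1 - c/((n:ℝ)+1+τ₂) := by linarith
      have hy' : |y (n+1) - K| ≤ α*c*ε/4 := by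
        have := hN₁ (n+1) (by omega)
        rw [Real.dist_eq] at this
        linarith
      have h1 : |x (n+1) - L| ≤ (1 - c/((n:ℝ)+1+τ₂)) * |x n - L| + (α*c*ε/4)/(α*((n:ℝ)+1+τ₂)) := by
        rw [herec n]
        refine (abs_add_le _ _).trans ?_
        rw [abs_mul, abs_of_nonneg hf0, abs_div,
          abs_of_pos (by positivity : (0:ℝ) < α*((n:ℝ)+1+τ₂))]
        gcongr
      have h2 : (α*c*ε/4)/(α*((n:ℝ)+1+τ₂)) = (c/((n:ℝ)+1+τ₂)) * (ε/4) := by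
        field_simp
      rw [h2] at h1
      nlinarith
    set M : ℝ := max (|x N - L| - ε/4) 0 with hM_def
    have hM0 : 0 ≤ M := le_max_right _ _
    have hind : ∀ n, N ≤ n →
        |x n - L| - ε/4 ≤ M * ∏ k ∈ Finset.Ico N n, (1 - c/((k:ℝ)+1+τ₂)) := by
      intro n hn
      induction n, hn using Nat.le_induction with
      | base => simp [Finset.Ico_self, hM_def]
      | succ n hn ih =>
        rw [Finset.prod_Ico_succ_top hn]
        have hfn : 0 ≤ 1 - c/((n:ℝ)+1+τ₂) := by
          have := hfac n hn; linarith
        calc |x (n+1) - L| - ε/4 ≤ (1 - c/((n:ℝ)+1+τ₂)) * (|x n - L| - ε/4) := hkey n hn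
          _ ≤ (1 - c/((n:ℝ)+1+τ₂)) * (M * ∏ k ∈ Finset.Ico N n, (1 - c/((k:ℝ)+1+τ₂))) :=
            mul_le_mul_of_nonneg_left ih hfn
          _ = M * ((∏ k ∈ Finset.Ico N n, (1 - c/((k:ℝ)+1+τ₂))) * (1 - c/((n:ℝ)+1+τ₂))) := by
            ring
    have hP : Tendsto (fun n => M * ∏ k ∈ Finset.Ico N n, (1 - c/((k:ℝ)+1+τ₂))) atTop (𝓝 0) := by
      have := (prod_tendsto_zero_aux c τ₂ hc hτ₂ N hfac).const_mul M
      simpa using this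
    have hPsmall : ∀ᶠ n in atTop, M * ∏ k ∈ Finset.Ico N n, (1 - c/((k:ℝ)+1+τ₂)) < ε/2 :=
      hP.eventually_lt_const (by linarith)
    filter_upwards [eventually_ge_atTop N, hPsmall] with n hn hsm
    have h3 := hind n hn
    rw [Real.norm_eq_abs]
    linarith
  have h4 : Tendsto (fun n => (x n - L) + L) atTop (𝓝 (0 + L)) := he0.add_const L
  simpa using h4

/-- **The asymptotic transfer for discrete limit laws** (eq. (6.9)).
If `x_n = (1 + mτ₁/(n+τ₂)) x_{n-1} + y_n/(α(n+τ₂))` with `τ₁ < 0`, `τ₂ ≥ 0`, `α > 0`,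
`β = -ατ₁ > 0` and `y_n → K`, then `x_n → K/(mβ)`. -/
theorem discrete_asymptotic_transfer
    (m : ℕ) (hm : 1 ≤ m) (τ₁ τ₂ α β K : ℝ)
    (hτ₁ : τ₁ < 0) (hτ₂ : 0 ≤ τ₂) (hα : 0 < α)
    (hβ : β = -α * τ₁)
    (x : ℕ → ℝ) (y : ℕ → ℝ)
    (hrec : ∀ n : ℕ, x (n + 1) =
      (1 + (m : ℝ) * τ₁ / (((n : ℝ) + 1) + τ₂)) * x n +
        y (n + 1) / (α * (((n : ℝ) + 1) + τ₂)))
    (hy : Tendsto y atTop (𝓝 K)) :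
    Tendsto x atTop (𝓝 (K / ((m : ℝ) * β))) := by
  have hm0 : (0:ℝ) < (m:ℝ) := by exact_mod_cast Nat.lt_of_lt_of_le Nat.zero_lt_one hm
  have hc : 0 < (m:ℝ) * (-τ₁) := mul_pos hm0 (by linarith)
  have hmβ : (m:ℝ) * β = α * ((m:ℝ) * (-τ₁)) := by rw [hβ]; ring
  have hmβ0 : (m:ℝ) * β ≠ 0 := by rw [hmβ]; positivity
  refine transfer_aux ((m:ℝ) * (-τ₁)) α (K / ((m:ℝ) * β)) K τ₂ hc hα hτ₂ x y ?_ ?_ hy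
  · rw [hmβ]
    field_simp [hα.ne', hm0.ne', hτ₁.ne]
  · intro n
    rw [hrec n]
    ring
end

section
/- Assume all coefficients [v^k]P_n are nonnegative, c₀ > 0, α > 0, γ ≥ 0, β < 0 (so τ₁ := −β/α > 0), β' ≠ 0, and γ'/β' < 1. Put τ₂ := γ/α and, for m ≥ 1, K_m := [ Γ(m − γ'/β')·Γ(1+τ₂) / ( Γ(1 − γ'/β')·Γ(1+τ₂+m·τ₁) ) ] · ( m·c₁/c₀ − γ'/β ) · (β'/β)^{m−1}. Then for every integer m ≥ 1, both the m-th moment and the m-th factorial moment of X_n are asymptotic to K_m·n^{m·τ₁}: E[X_n^m]/n^{m·τ₁} → K_m and Q_{n,m}/n^{m·τ₁} → K_m as n → ∞. -/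
open Polynomial Filter Topology

namespace Prop66

lemma iter_deriv_add (m : ℕ) (p q : ℝ[X]) :
    derivative^[m] (p + q) = derivative^[m] p + derivative^[m] q := by
  induction m generalizing p q with
  | zero => simp
  | succ k ih => simp [Function.iterate_succ_apply, derivative_add, ih]

lemma iter_deriv_C_mul (m : ℕ) (c : ℝ) (p : ℝ[X]) :
    derivative^[m] (C c * p) = C c * derivative^[m] p :=
  iterate_derivative_C_mul c p m

/-- eval 1 of m+1 iterated derivative of (X-1)*p -/
lemma L1 (m : ℕ) (p : ℝ[X]) :
    ((derivative^[m + 1] ((X - C 1) * p)).eval 1) = (m + 1 : ℝ) * (derivative^[m] p).eval 1 := by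
  induction m generalizing p with
  | zero =>
    simp [derivative_mul]
  | succ k ih =>
    rw [Function.iterate_succ_apply]
    have h : derivative ((X - C 1) * p) = p + (X - C 1) * derivative p := by
      rw [derivative_mul]; simp
    rw [h, iter_deriv_add, eval_add, ih (derivative p), ← Function.iterate_succ_apply]
    push_cast
    ring

lemma L1' (p : ℝ[X]) : ((X - C 1) * p).eval 1 = 0 := by simp

lemma L2 (m : ℕ) (p : ℝ[X]) :
    ((derivative^[m + 2] ((X - C 1) ^ 2 * p)).eval 1)
      = ((m : ℝ) + 2) * ((m : ℝ) + 1) * (derivative^[m] p).eval 1 := by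
  have h : (X - C 1) ^ 2 * p = (X - C 1) * ((X - C 1) * p) := by ring
  rw [h, L1 (m + 1) ((X - C 1) * p), L1 m p]
  push_cast
  ring

lemma L2zero (p : ℝ[X]) : ((X - C 1) ^ 2 * p).eval 1 = 0 := by simp

lemma L2one (p : ℝ[X]) : (derivative^[1] ((X - C 1) ^ 2 * p)).eval 1 = 0 := by
  simp [derivative_mul, derivative_pow]



lemma split (A β β' γ' : ℝ) (p : ℝ[X]) :
    (C A + C γ' * (X - 1)) * p + (C β + C β' * (X - 1)) * (1 - X) * derivative p
    = C A * p + C γ' * ((X - C 1) * p) + C (-β) * ((X - C 1) * derivative p)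
      + C (-β') * ((X - C 1) ^ 2 * derivative p) := by
  simp only [map_neg, map_one]
  ring

lemma D_rec (A β β' γ' : ℝ) (p q : ℝ[X])
    (hq : q = (C A + C γ' * (X - 1)) * p + (C β + C β' * (X - 1)) * (1 - X) * derivative p)
    (m : ℕ) :
    (derivative^[m] q).eval 1
      = (A + (m : ℝ) * (-β)) * (derivative^[m] p).eval 1
        + (m : ℝ) * (γ' - ((m : ℝ) - 1) * β') * (derivative^[m - 1] p).eval 1 := by
  rw [hq, split]
  rw [iter_deriv_add, iter_deriv_add, iter_deriv_add,
    iter_deriv_C_mul, iter_deriv_C_mul, iter_deriv_C_mul, iter_deriv_C_mul]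
  simp only [eval_add, eval_mul, eval_C]
  match m with
  | 0 => simp
  | 1 =>
    rw [L1 0, L1 0, L2one]
    simp [Function.iterate_succ_apply]
    ring
  | (k : ℕ) + 2 =>
    rw [L1 (k + 1), L1 (k + 1), L2 k,
      show derivative^[k + 1] (derivative p) = derivative^[k + 2] p from by
        rw [← Function.iterate_succ_apply],
      show derivative^[k] (derivative p) = derivative^[k + 1] p from by
        rw [← Function.iterate_succ_apply]]
    push_cast
    ring



noncomputable def aa (β β' γ' c₀ c₁ : ℝ) (m j : ℕ) : ℝ :=
  if j = 0 then c₀ * (-(β'/β))^m * ∏ i ∈ Finset.range m, ((i:ℝ) - γ'/β')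
  else ((j:ℝ)*c₁ - c₀*γ'/β) * (β'/β)^(j-1) * (-(β'/β))^(m-j) * (m.choose j : ℝ)
       * ∏ i ∈ Finset.range (m-1), ((i:ℝ) + 1 - γ'/β')

lemma aa_zero (β β' γ' c₀ c₁ : ℝ) (m : ℕ) :
    aa β β' γ' c₀ c₁ m 0 = c₀ * (-(β'/β))^m * ∏ i ∈ Finset.range m, ((i:ℝ) - γ'/β') :=
  if_pos rfl

lemma aa_succ (β β' γ' c₀ c₁ : ℝ) (m j : ℕ) :
    aa β β' γ' c₀ c₁ m (j+1) = (((j:ℝ)+1)*c₁ - c₀*γ'/β) * (β'/β)^j * (-(β'/β))^(m-(j+1))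
      * (m.choose (j+1) : ℝ) * ∏ i ∈ Finset.range (m-1), ((i:ℝ) + 1 - γ'/β') := by
  rw [aa, if_neg (Nat.succ_ne_zero j)]
  push_cast
  norm_num

lemma neg_one_pow_sub (b a : ℕ) (h : b ≤ a) : (-1:ℝ)^(a-b) = (-1)^a * (-1)^b := by
  obtain ⟨c, rfl⟩ : ∃ c, a = b + c := ⟨a - b, by omega⟩
  rw [show b + c - b = c by omega, pow_add]
  have hb : (-1:ℝ)^b * (-1)^b = 1 := by
    rw [← pow_add]; exact Even.neg_one_pow ⟨b, rfl⟩
  calc (-1:ℝ)^c = 1 * (-1)^c := by ring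
    _ = (-1:ℝ)^b * (-1)^b * (-1)^c := by rw [hb]
    _ = (-1:ℝ) ^ b * (-1) ^ c * (-1) ^ b := by ring

/-- real alternating sum of binomial coefficients -/
lemma alt_sum (n : ℕ) (hn : n ≠ 0) :
    ∑ i ∈ Finset.range (n+1), (-1:ℝ)^i * (n.choose i : ℝ) = 0 := by
  have h := Int.alternating_sum_range_choose (n := n)
  rw [if_neg hn] at h
  have : ((∑ i ∈ Finset.range (n + 1), (-1:ℤ) ^ i * (n.choose i : ℤ) : ℤ) : ℝ) = ((0:ℤ):ℝ) := by
    rw [h]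
  push_cast at this
  convert this using 2

/-- `(m+1-j) * C(m+1,j) = (m+1) * C(m,j)` for `j ≤ m`. -/
lemma choose_id (m j : ℕ) (hj : j ≤ m) :
    (m + 1 - j) * (m+1).choose j = (m+1) * m.choose j := by
  have h1 : (m+1).choose j = (m+1).choose (m+1-j) := (Nat.choose_symm (by omega)).symm
  have h3 := Nat.add_one_mul_choose_eq m (m - j)
  rw [Nat.choose_symm hj] at h3
  rw [h1, show m + 1 - j = (m - j) + 1 by omega, mul_comm]
  simpa [Nat.succ_eq_add_one] using h3.symm

lemma coeff_id (β β' γ' c₀ c₁ : ℝ) (hβ : β ≠ 0) (hβ' : β' ≠ 0) (m j : ℕ) (hj : j ≤ m) :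
    ((m:ℝ) + 1 - (j:ℝ)) * β * aa β β' γ' c₀ c₁ (m+1) j
      = ((m:ℝ) + 1) * (γ' - (m:ℝ) * β') * aa β β' γ' c₀ c₁ m j := by
  have hx : β' * (γ'/β') = γ' := by field_simp
  have hkey : γ' - (m:ℝ) * β' = -β' * ((m:ℝ) - γ'/β') := by
    field_simp; ring
  match j with
  | 0 =>
    rw [aa_zero, aa_zero, Finset.prod_range_succ, hkey]
    have hw : β * (-(β'/β)) = -β' := by field_simp
    push_cast
    calc ((m:ℝ) + 1 - 0) * β * (c₀ * (-(β'/β))^(m+1) *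
            ((∏ i ∈ Finset.range m, ((i:ℝ) - γ'/β')) * ((m:ℝ) - γ'/β')))
        = ((m:ℝ) + 1) * (β * (-(β'/β))) * ((m:ℝ) - γ'/β') *
            (c₀ * (-(β'/β))^m * ∏ i ∈ Finset.range m, ((i:ℝ) - γ'/β')) := by ring
      _ = _ := by rw [hw]; ring
  | (j' : ℕ) + 1 =>
    have hjm : j' + 1 ≤ m := hj
    have hm1 : 1 ≤ m := le_trans (by omega) hj
    rw [aa_succ, aa_succ]
    -- rewrite the products and powers
    have hprod : (∏ i ∈ Finset.range (m+1-1), ((i:ℝ) + 1 - γ'/β'))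
        = (∏ i ∈ Finset.range (m-1), ((i:ℝ) + 1 - γ'/β')) * ((m:ℝ) - γ'/β') := by
      rw [show m + 1 - 1 = (m-1) + 1 by omega, Finset.prod_range_succ]
      congr 2
      push_cast [Nat.cast_sub hm1]
      ring
    have hpow : (-(β'/β))^(m+1-(j'+1)) = (-(β'/β))^(m-(j'+1)) * (-(β'/β)) := by
      rw [show m + 1 - (j'+1) = (m - (j'+1)) + 1 by omega, pow_succ]
    have hch : ((m:ℝ) + 1 - ((j':ℝ)+1)) * ((m+1).choose (j'+1) : ℝ)
        = ((m:ℝ) + 1) * (m.choose (j'+1) : ℝ) := by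
      have h := choose_id m (j'+1) hjm
      have hcast : ((m:ℝ)+1-((j':ℝ)+1)) = ((m + 1 - (j'+1) : ℕ) : ℝ) := by
        rw [Nat.cast_sub (show j'+1 ≤ m+1 by omega)]; push_cast; ring
      rw [hcast, ← Nat.cast_mul, h, Nat.cast_mul]
      push_cast
      ring
    have hw : β * (-(β'/β)) = -β' := by field_simp
    rw [hprod, hpow, hkey]
    push_cast
    set Pr := ∏ i ∈ Finset.range (m-1), ((i:ℝ) + 1 - γ'/β') with hPr
    set C1 := ((m+1).choose (j'+1) : ℝ) with hC1
    set C0 := (m.choose (j'+1) : ℝ) with hC0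
    set W := (-(β'/β))^(m-(j'+1)) with hW
    set V := (β'/β)^j' with hV
    linear_combination
      ((((j':ℝ)+1)*c₁ - c₀*γ'/β) * V * W * Pr * ((m:ℝ) - γ'/β'))
          * (((m:ℝ)+1-((j':ℝ)+1)) * C1) * hw
        + ((((j':ℝ)+1)*c₁ - c₀*γ'/β) * V * W * Pr * ((m:ℝ) - γ'/β') * (-β')) * hch

lemma init_id (β β' γ' c₀ c₁ : ℝ) (hβ : β ≠ 0) (hβ' : β' ≠ 0) (m : ℕ) :
    ∑ j ∈ Finset.range (m+1), aa β β' γ' c₀ c₁ m j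
      = if m = 0 then c₀ else if m = 1 then c₁ else 0 := by
  match m with
  | 0 =>
    simp [aa_zero]
  | 1 =>
    rw [Finset.sum_range_succ, Finset.sum_range_one, aa_zero, aa_succ]
    norm_num [Finset.prod_range_one]
    field_simp
    ring
  | (k : ℕ) + 2 =>
    rw [if_neg (by omega), if_neg (by omega), Finset.sum_range_succ']
    set x := γ'/β' with hxdef
    set w := β'/β with hwdef
    set G := ∏ i ∈ Finset.range (k+1), ((i:ℝ) + 1 - x) with hGdef
    have hwx : w * x = γ'/β := by
      rw [hwdef, hxdef]; field_simp
    have ha0 : aa β β' γ' c₀ c₁ (k+2) 0 = -(c₀ * (-1:ℝ)^k * w^(k+2) * x * G) := by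
      rw [aa_zero, Finset.prod_range_succ']
      have h1 : (∏ i ∈ Finset.range (k+1), (((i+1 : ℕ) : ℝ) - x)) = G := by
        rw [hGdef]; exact Finset.prod_congr rfl fun i _ => by push_cast; ring
      rw [h1, neg_pow]
      have h2 : (-1:ℝ)^(k+2) = (-1)^k := by
        rw [pow_succ, pow_succ]; ring
      rw [h2]
      push_cast
      ring
    have haj : ∀ j ∈ Finset.range (k+2), aa β β' γ' c₀ c₁ (k+2) (j+1)
        = ((-1:ℝ)^(k+1) * w^(k+1) * G) *
          ((-1:ℝ)^j * (((j:ℝ)+1)*c₁ - c₀*γ'/β) * ((k+2).choose (j+1) : ℝ)) := by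
      intro j hj
      have hjk : j ≤ k + 1 := by
        have := Finset.mem_range.mp hj; omega
      rw [aa_succ]
      have hG' : (∏ i ∈ Finset.range (k+2-1), ((i:ℝ) + 1 - γ'/β')) = G := by
        rw [show k + 2 - 1 = k + 1 by omega, hGdef, hxdef]
      have he : k + 2 - (j+1) = k + 1 - j := by omega
      rw [hG', he, neg_pow, neg_one_pow_sub j (k+1) hjk]
      have hw2 : w^j * w^(k+1-j) = w^(k+1) := by
        rw [← pow_add]; congr 1; omega
      calc (((j:ℝ)+1)*c₁ - c₀*γ'/β) * w^j * ((-1:ℝ)^(k+1) * (-1)^j * w^(k+1-j))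
            * ((k+2).choose (j+1) : ℝ) * G
          = (w^j * w^(k+1-j)) * ((((j:ℝ)+1)*c₁ - c₀*γ'/β) * ((-1:ℝ)^(k+1) * (-1)^j)
            * ((k+2).choose (j+1) : ℝ) * G) := by ring
        _ = _ := by rw [hw2]; ring
    rw [Finset.sum_congr rfl haj, ← Finset.mul_sum, ha0]
    have hsplit : ∑ j ∈ Finset.range (k+2),
        ((-1:ℝ)^j * (((j:ℝ)+1)*c₁ - c₀*γ'/β) * ((k+2).choose (j+1) : ℝ))
        = c₁ * (∑ j ∈ Finset.range (k+2), (-1:ℝ)^j * (((j:ℝ)+1) * ((k+2).choose (j+1) : ℝ)))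
          - (c₀*γ'/β) * (∑ j ∈ Finset.range (k+2), (-1:ℝ)^j * ((k+2).choose (j+1) : ℝ)) := by
      rw [Finset.mul_sum, Finset.mul_sum, ← Finset.sum_sub_distrib]
      exact Finset.sum_congr rfl fun j _ => by ring
    have hS2 : (∑ j ∈ Finset.range (k+2), (-1:ℝ)^j * ((k+2).choose (j+1) : ℝ)) = 1 := by
      have h := alt_sum (k+2) (by omega)
      rw [Finset.sum_range_succ'] at h
      have h2 : ∑ j ∈ Finset.range (k+2), (-1:ℝ)^(j+1) * ((k+2).choose (j+1) : ℝ)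
          = - ∑ j ∈ Finset.range (k+2), (-1:ℝ)^j * ((k+2).choose (j+1) : ℝ) := by
        rw [← Finset.sum_neg_distrib]
        exact Finset.sum_congr rfl fun j _ => by rw [pow_succ]; ring
      rw [h2] at h
      simp at h
      linarith
    have hS1 : (∑ j ∈ Finset.range (k+2), (-1:ℝ)^j * (((j:ℝ)+1) * ((k+2).choose (j+1) : ℝ))) = 0 := by
      have hper : ∀ j : ℕ, ((j:ℝ)+1) * ((k+2).choose (j+1) : ℝ)
          = ((k:ℝ)+2) * ((k+1).choose j : ℝ) := by
        intro j
        have h := Nat.add_one_mul_choose_eq (k+1) j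
        have hc : (((k+2) * (k+1).choose j : ℕ) : ℝ) = (((k+2).choose (j+1) * (j+1) : ℕ) : ℝ) := by
          rw [show k + 2 = Nat.succ (k+1) from rfl]
          exact_mod_cast congrArg (Nat.cast (R := ℝ)) h
        push_cast at hc
        linarith
      have : ∀ j ∈ Finset.range (k+2), (-1:ℝ)^j * (((j:ℝ)+1) * ((k+2).choose (j+1) : ℝ))
          = ((k:ℝ)+2) * ((-1:ℝ)^j * ((k+1).choose j : ℝ)) := by
        intro j _; rw [hper j]; ring
      rw [Finset.sum_congr rfl this, ← Finset.mul_sum, alt_sum (k+1) (by omega), mul_zero]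
    rw [hsplit, hS1, hS2]
    have hpow : w^(k+2) * x = w^(k+1) * (γ'/β) := by
      rw [pow_succ, mul_assoc, hwx]
    have h1 : (-1:ℝ)^(k+1) = -(-1:ℝ)^k := by rw [pow_succ]; ring
    rw [h1]
    calc -(-1:ℝ)^k * w^(k+1) * G * (c₁ * 0 - c₀*γ'/β * 1) + -(c₀ * (-1:ℝ)^k * w^(k+2) * x * G)
        = (-1:ℝ)^k * w^(k+1) * G * (c₀*γ'/β) - c₀ * (-1:ℝ)^k * (w^(k+2) * x) * G := by ring
      _ = 0 := by rw [hpow]; ring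



noncomputable def Pp (α β γ : ℝ) (j n : ℕ) : ℝ :=
  ∏ k ∈ Finset.range n, (α*((k:ℝ)+1) + γ + (j:ℝ)*(-β))

lemma Pp_succ (α β γ : ℝ) (j n : ℕ) :
    Pp α β γ j (n+1) = Pp α β γ j n * (α*((n:ℝ)+1) + γ + (j:ℝ)*(-β)) :=
  Finset.prod_range_succ _ n

lemma closed_form (α β β' γ γ' c₀ c₁ : ℝ) (hβ : β ≠ 0) (hβ' : β' ≠ 0)
    (P : ℕ → Polynomial ℝ)
    (hP0 : P 0 = C c₀ + C c₁ * (X - 1))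
    (hrec : ∀ n : ℕ, P (n + 1) =
      (C (α * ((n : ℝ) + 1) + γ) + C γ' * (X - 1)) * P n +
        (C β + C β' * (X - 1)) * (1 - X) * derivative (P n)) :
    ∀ n m, (derivative^[m] (P n)).eval 1
      = ∑ j ∈ Finset.range (m+1), aa β β' γ' c₀ c₁ m j * Pp α β γ j n := by
  intro n
  induction n with
  | zero =>
    intro m
    have hone : ∑ j ∈ Finset.range (m+1), aa β β' γ' c₀ c₁ m j * Pp α β γ j 0
        = ∑ j ∈ Finset.range (m+1), aa β β' γ' c₀ c₁ m j :=
      Finset.sum_congr rfl fun j _ => by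
        rw [Pp, Finset.prod_range_zero, mul_one]
    rw [hone, init_id β β' γ' c₀ c₁ hβ hβ' m, hP0]
    match m with
    | 0 => simp
    | 1 => simp
    | (k : ℕ) + 2 =>
      rw [if_neg (by omega), if_neg (by omega)]
      have h1 : derivative (C c₀ + C c₁ * (X - 1) : ℝ[X]) = C c₁ := by simp
      rw [Function.iterate_succ_apply, h1, iterate_derivative_C (by omega), eval_zero]
  | succ n ih =>
    intro m
    have hD := D_rec (α*((n:ℝ)+1)+γ) β β' γ' (P n) (P (n+1)) (hrec n) m
    match m with
    | 0 =>
      rw [hD, ih 0, Finset.sum_range_one, Finset.sum_range_one, Pp_succ]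
      push_cast
      ring
    | (M : ℕ) + 1 =>
      rw [hD, show M + 1 - 1 = M by omega, ih (M+1), ih M]
      symm
      calc ∑ j ∈ Finset.range (M+2), aa β β' γ' c₀ c₁ (M+1) j * Pp α β γ j (n+1)
          = ∑ j ∈ Finset.range (M+2),
              (aa β β' γ' c₀ c₁ (M+1) j * Pp α β γ j n
                  * ((α*((n:ℝ)+1)+γ) + ((M:ℝ)+1)*(-β))
                + (((M:ℝ)+1-(j:ℝ))*β * aa β β' γ' c₀ c₁ (M+1) j) * Pp α β γ j n) := by
            refine Finset.sum_congr rfl fun j _ => ?_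
            rw [Pp_succ]
            push_cast
            ring
        _ = ((α*((n:ℝ)+1)+γ) + ((M:ℝ)+1)*(-β))
              * (∑ j ∈ Finset.range (M+2), aa β β' γ' c₀ c₁ (M+1) j * Pp α β γ j n)
            + ∑ j ∈ Finset.range (M+2),
                (((M:ℝ)+1-(j:ℝ))*β * aa β β' γ' c₀ c₁ (M+1) j) * Pp α β γ j n := by
            rw [Finset.sum_add_distrib, Finset.mul_sum]
            congr 1
            exact Finset.sum_congr rfl fun j _ => by ring
        _ = ((α*((n:ℝ)+1)+γ) + ((M:ℝ)+1)*(-β))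
              * (∑ j ∈ Finset.range (M+2), aa β β' γ' c₀ c₁ (M+1) j * Pp α β γ j n)
            + ((M:ℝ)+1) * (γ' - (M:ℝ)*β')
              * ∑ j ∈ Finset.range (M+1), aa β β' γ' c₀ c₁ M j * Pp α β γ j n := by
            congr 1
            rw [Finset.sum_range_succ]
            have hlast : (((M:ℝ)+1-(((M+1):ℕ):ℝ))*β * aa β β' γ' c₀ c₁ (M+1) (M+1))
                * Pp α β γ (M+1) n = 0 := by
              push_cast
              ring_nf
            rw [hlast, add_zero, Finset.mul_sum]
            refine Finset.sum_congr rfl fun j hj => ?_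
            have hjM : j ≤ M := by have := Finset.mem_range.mp hj; omega
            rw [coeff_id β β' γ' c₀ c₁ hβ hβ' M j hjM]
            ring
        _ = _ := by push_cast; ring


lemma ratio_tendsto (a b : ℝ) (hb : 0 ≤ b) (hab : b ≤ a) :
    Tendsto (fun n : ℕ => (∏ k ∈ Finset.range n, (((k:ℝ)+1+a) / ((k:ℝ)+1+b))) / (n:ℝ)^(a-b))
      atTop (𝓝 (Real.Gamma (1+b) / Real.Gamma (1+a))) := by
  have ha1 : (0:ℝ) < 1 + a := by linarith
  have hb1 : (0:ℝ) < 1 + b := by linarith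
  have hGpos : ∀ (s : ℝ), 0 < s → ∀ n : ℕ, 1 ≤ n → 0 < Real.GammaSeq s n := by
    intro s hs n hn
    have h1 : (0:ℝ) < (n:ℝ) ^ s := Real.rpow_pos_of_pos (by exact_mod_cast hn) s
    have h2 : (0:ℝ) < (n.factorial : ℝ) := by exact_mod_cast n.factorial_pos
    have h3 : (0:ℝ) < ∏ j ∈ Finset.range (n+1), (s + (j:ℝ)) :=
      Finset.prod_pos fun j _ => by positivity
    rw [Real.GammaSeq]
    positivity
  -- the eventual identity
  have hEq : ∀ n : ℕ, 1 ≤ n →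
      (∏ k ∈ Finset.range n, (((k:ℝ)+1+a) / ((k:ℝ)+1+b))) / (n:ℝ)^(a-b)
        = ((1+b+(n:ℝ))/(1+a+(n:ℝ))) * (Real.GammaSeq (1+b) n / Real.GammaSeq (1+a) n) := by
    intro n hn
    have hnp : (0:ℝ) < (n:ℝ) := by exact_mod_cast hn
    have hprodA : ∏ j ∈ Finset.range (n+1), ((1+a) + (j:ℝ))
        = (∏ k ∈ Finset.range n, ((k:ℝ)+1+a)) * (1+a+(n:ℝ)) := by
      rw [Finset.prod_range_succ]
      congr 1
      exact Finset.prod_congr rfl fun k _ => by ring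
    have hprodB : ∏ j ∈ Finset.range (n+1), ((1+b) + (j:ℝ))
        = (∏ k ∈ Finset.range n, ((k:ℝ)+1+b)) * (1+b+(n:ℝ)) := by
      rw [Finset.prod_range_succ]
      congr 1
      exact Finset.prod_congr rfl fun k _ => by ring
    have hPa : (0:ℝ) < ∏ k ∈ Finset.range n, ((k:ℝ)+1+a) :=
      Finset.prod_pos fun k _ => by
        have hk : (0:ℝ) ≤ (k:ℝ) := Nat.cast_nonneg k
        linarith
    have hPb : (0:ℝ) < ∏ k ∈ Finset.range n, ((k:ℝ)+1+b) :=
      Finset.prod_pos fun k _ => by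
        have hk : (0:ℝ) ≤ (k:ℝ) := Nat.cast_nonneg k
        linarith
    have hsplit : ∏ k ∈ Finset.range n, (((k:ℝ)+1+a) / ((k:ℝ)+1+b))
        = (∏ k ∈ Finset.range n, ((k:ℝ)+1+a)) / (∏ k ∈ Finset.range n, ((k:ℝ)+1+b)) :=
      Finset.prod_div_distrib _ _
    rw [hsplit, Real.GammaSeq, Real.GammaSeq, hprodA, hprodB]
    have hfa : (0:ℝ) < (n.factorial : ℝ) := by exact_mod_cast n.factorial_pos
    have hra : (0:ℝ) < (n:ℝ) ^ (1+a) := Real.rpow_pos_of_pos hnp _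
    have hrb : (0:ℝ) < (n:ℝ) ^ (1+b) := Real.rpow_pos_of_pos hnp _
    have hrab : (0:ℝ) < (n:ℝ) ^ (a-b) := Real.rpow_pos_of_pos hnp _
    have hpow : (n:ℝ) ^ (1+a) = (n:ℝ) ^ (1+b) * (n:ℝ) ^ (a-b) := by
      rw [← Real.rpow_add hnp]; congr 1; ring
    rw [hpow]
    field_simp
  have hmain : Tendsto (fun n : ℕ =>
      ((1+b+(n:ℝ))/(1+a+(n:ℝ))) * (Real.GammaSeq (1+b) n / Real.GammaSeq (1+a) n))
      atTop (𝓝 (Real.Gamma (1+b) / Real.Gamma (1+a))) := by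
    have h1 : Tendsto (fun n : ℕ => (1+b+(n:ℝ))/(1+a+(n:ℝ))) atTop (𝓝 1) := by
      have hx : Tendsto (fun x : ℝ => (1+b+x)/(1+a+x)) atTop (𝓝 1) := by
        have hrw : ∀ᶠ x : ℝ in atTop, (1+b+x)/(1+a+x) = 1 + (b-a) * (1/(1+a+x)) := by
          filter_upwards [eventually_gt_atTop (0:ℝ)] with x hx
          have : 1 + a + x ≠ 0 := by linarith
          field_simp
          ring
        have hlim : Tendsto (fun x : ℝ => 1 + (b-a) * (1/(1+a+x))) atTop (𝓝 (1 + (b-a) * 0)) := by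
          refine tendsto_const_nhds.add (tendsto_const_nhds.mul ?_)
          simp only [one_div]
          refine Tendsto.inv_tendsto_atTop ?_
          exact tendsto_atTop_add_const_left _ _ tendsto_id
        have hz : (1:ℝ) + (b-a) * 0 = 1 := by ring
        rw [hz] at hlim
        exact Tendsto.congr' (hrw.mono fun x h => h.symm) hlim
      exact hx.comp tendsto_natCast_atTop_atTop
    have h2 : Tendsto (fun n : ℕ => Real.GammaSeq (1+b) n / Real.GammaSeq (1+a) n) atTop
        (𝓝 (Real.Gamma (1+b) / Real.Gamma (1+a))) :=
      (Real.GammaSeq_tendsto_Gamma (1+b)).div (Real.GammaSeq_tendsto_Gamma (1+a))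
        (Real.Gamma_pos_of_pos ha1).ne'
    have := h1.mul h2
    rwa [one_mul] at this
  refine Tendsto.congr' ?_ hmain
  filter_upwards [eventually_ge_atTop 1] with n hn
  exact (hEq n hn).symm

lemma rpow_lim_zero (c : ℝ) (hc : c < 0) :
    Tendsto (fun n : ℕ => (n:ℝ)^c) atTop (𝓝 0) := by
  have h := tendsto_rpow_neg_atTop (y := -c) (by linarith)
  simp only [neg_neg] at h
  exact h.comp tendsto_natCast_atTop_atTop

lemma sum_scaled_tendsto (m : ℕ) (c : ℕ → ℝ) (f : ℕ → ℕ → ℝ) (L : ℕ → ℝ) (τ : ℝ) (hτ : 0 < τ)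
    (hf : ∀ j, j ≤ m → Tendsto (fun n : ℕ => f j n / (n:ℝ)^((j:ℝ)*τ)) atTop (𝓝 (L j))) :
    Tendsto (fun n : ℕ => (∑ j ∈ Finset.range (m+1), c j * f j n) / (n:ℝ)^((m:ℝ)*τ))
      atTop (𝓝 (c m * L m)) := by
  have hsummand : ∀ j, j ≤ m →
      Tendsto (fun n : ℕ => c j * (f j n / (n:ℝ)^((j:ℝ)*τ)) * (n:ℝ)^(((j:ℝ)-(m:ℝ))*τ))
        atTop (𝓝 (if j = m then c j * L j else 0)) := by
    intro j hj
    rcases eq_or_lt_of_le hj with rfl | hlt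
    · rw [if_pos rfl]
      have hbase : Tendsto (fun n : ℕ => c j * (f j n / (n:ℝ)^((j:ℝ)*τ))) atTop
          (𝓝 (c j * L j)) := tendsto_const_nhds.mul (hf j le_rfl)
      refine Tendsto.congr (fun n => ?_) hbase
      rw [show ((j:ℝ)-(j:ℝ))*τ = 0 by ring, Real.rpow_zero, mul_one]
    · rw [if_neg hlt.ne]
      have hc : ((j:ℝ)-(m:ℝ))*τ < 0 := by
        have : (j:ℝ) < (m:ℝ) := by exact_mod_cast hlt
        nlinarith
      have h1 := ((tendsto_const_nhds (x := c j)).mul (hf j hj)).mul (rpow_lim_zero _ hc)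
      rw [mul_zero] at h1
      exact h1
  have hsum := tendsto_finset_sum (Finset.range (m+1))
    (fun j hj => hsummand j (by have := Finset.mem_range.mp hj; omega))
  rw [Finset.sum_ite_eq' (Finset.range (m+1)) m (fun j => c j * L j)] at hsum
  rw [if_pos (Finset.self_mem_range_succ m)] at hsum
  refine Tendsto.congr' ?_ hsum
  filter_upwards [eventually_ge_atTop 1] with n hn
  have hnp : (0:ℝ) < (n:ℝ) := by exact_mod_cast hn
  rw [Finset.sum_div]
  refine Finset.sum_congr rfl fun j hj => ?_
  rw [show ((j:ℝ)-(m:ℝ))*τ = (j:ℝ)*τ - (m:ℝ)*τ by ring, Real.rpow_sub hnp]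
  have h1 : (n:ℝ)^((j:ℝ)*τ) ≠ 0 := (Real.rpow_pos_of_pos hnp _).ne'
  have h2 : (n:ℝ)^((m:ℝ)*τ) ≠ 0 := (Real.rpow_pos_of_pos hnp _).ne'
  field_simp

lemma Pp_pos (α β γ : ℝ) (hα : 0 < α) (hγ : 0 ≤ γ) (hβ : β ≤ 0) (j n : ℕ) :
    0 < Pp α β γ j n := by
  refine Finset.prod_pos fun k _ => ?_
  have h1 : (0:ℝ) ≤ (k:ℝ) := Nat.cast_nonneg k
  have h2 : (0:ℝ) ≤ (j:ℝ) := Nat.cast_nonneg j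
  nlinarith

lemma Pp_ratio_tendsto (α β γ : ℝ) (hα : 0 < α) (hγ : 0 ≤ γ) (hβ : β < 0) (j : ℕ) :
    Tendsto (fun n : ℕ => (Pp α β γ j n / Pp α β γ 0 n) / (n:ℝ)^((j:ℝ)*(-β/α)))
      atTop (𝓝 (Real.Gamma (1+γ/α) / Real.Gamma (1+γ/α+(j:ℝ)*(-β/α)))) := by
  have hτ : 0 ≤ (j:ℝ)*(-β/α) := by
    have h2 : (0:ℝ) ≤ (j:ℝ) := Nat.cast_nonneg j
    have h3 : 0 < -β/α := div_pos (by linarith) hα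
    exact mul_nonneg h2 h3.le
  have hb : (0:ℝ) ≤ γ/α := by positivity
  have h := ratio_tendsto (γ/α + (j:ℝ)*(-β/α)) (γ/α) hb (by linarith)
  have hfun : ∀ n : ℕ,
      (∏ k ∈ Finset.range n, (((k:ℝ)+1+(γ/α + (j:ℝ)*(-β/α))) / ((k:ℝ)+1+γ/α)))
          / (n:ℝ)^((γ/α + (j:ℝ)*(-β/α)) - γ/α)
        = (Pp α β γ j n / Pp α β γ 0 n) / (n:ℝ)^((j:ℝ)*(-β/α)) := by
    intro n
    have hprod : (∏ k ∈ Finset.range n, (((k:ℝ)+1+(γ/α + (j:ℝ)*(-β/α))) / ((k:ℝ)+1+γ/α)))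
        = Pp α β γ j n / Pp α β γ 0 n := by
      rw [Pp, Pp, ← Finset.prod_div_distrib]
      refine Finset.prod_congr rfl fun k _ => ?_
      rw [show α*((k:ℝ)+1) + γ + (j:ℝ)*(-β) = α * ((k:ℝ)+1+(γ/α + (j:ℝ)*(-β/α))) by
            field_simp; ring,
          show α*((k:ℝ)+1) + γ + ((0:ℕ):ℝ)*(-β) = α * ((k:ℝ)+1+γ/α) by
            push_cast; field_simp; ring,
          mul_div_mul_left _ _ (ne_of_gt hα)]
    rw [hprod, show (γ/α + (j:ℝ)*(-β/α)) - γ/α = (j:ℝ)*(-β/α) by ring]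
  have h2 : (1:ℝ) + γ/α + (j:ℝ)*(-β/α) = 1 + (γ/α + (j:ℝ)*(-β/α)) := by ring
  rw [h2]
  exact Tendsto.congr hfun h




def St : ℕ → ℕ → ℕ
  | 0, 0 => 1
  | 0, _+1 => 0
  | _+1, 0 => 0
  | m+1, j+1 => St m j + (j+1) * St m (j+1)

lemma St_gt : ∀ m j : ℕ, m < j → St m j = 0 := by
  intro m
  induction m with
  | zero => intro j hj; match j, hj with | j+1, _ => rfl
  | succ k ih =>
    intro j hj
    match j, hj with
    | j+1, hj =>
      show St k j + (j+1) * St k (j+1) = 0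
      rw [ih j (by omega), ih (j+1) (by omega)]
      simp

lemma St_self : ∀ m : ℕ, St m m = 1 := by
  intro m
  induction m with
  | zero => rfl
  | succ k ih =>
    show St k k + (k+1) * St k (k+1) = 1
    rw [ih, St_gt k (k+1) (by omega)]
    simp

lemma desc_mul (k j : ℕ) :
    (k.descFactorial j : ℝ) * (k:ℝ)
      = (k.descFactorial (j+1) : ℝ) + (j:ℝ) * (k.descFactorial j : ℝ) := by
  rcases le_or_gt j k with h | h
  · rw [Nat.descFactorial_succ]
    push_cast [Nat.cast_sub h]
    ring
  · rw [Nat.descFactorial_eq_zero_iff_lt.mpr h,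
      Nat.descFactorial_eq_zero_iff_lt.mpr (by omega)]
    norm_num

lemma pow_desc (k m : ℕ) :
    ((k:ℝ))^m = ∑ j ∈ Finset.range (m+1), (St m j : ℝ) * (k.descFactorial j : ℝ) := by
  induction m with
  | zero => simp [St]
  | succ m ih =>
    have h1 : ((k:ℝ))^(m+1) = (∑ j ∈ Finset.range (m+1),
        (St m j : ℝ) * (k.descFactorial j : ℝ)) * (k:ℝ) := by
      rw [← ih, pow_succ]
    rw [h1, Finset.sum_mul]
    have h2 : ∀ j ∈ Finset.range (m+1),
        (St m j : ℝ) * (k.descFactorial j : ℝ) * (k:ℝ)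
          = (St m j : ℝ) * (k.descFactorial (j+1) : ℝ)
            + (St m j : ℝ) * ((j:ℝ) * (k.descFactorial j : ℝ)) := by
      intro j _
      rw [mul_assoc, desc_mul]
      ring
    rw [Finset.sum_congr rfl h2, Finset.sum_add_distrib]
    -- target : = ∑ j in range (m+2), St (m+1) j * dF j
    rw [Finset.sum_range_succ' (fun j => (St (m+1) j : ℝ) * (k.descFactorial j : ℝ)) (m+1)]
    have hSt0 : (St (m+1) 0 : ℝ) = 0 := by norm_num [St]
    rw [hSt0, zero_mul, add_zero]
    have h3 : ∀ j ∈ Finset.range (m+1),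
        (St (m+1) (j+1) : ℝ) * (k.descFactorial (j+1) : ℝ)
          = (St m j : ℝ) * (k.descFactorial (j+1) : ℝ)
            + ((j:ℝ)+1) * (St m (j+1) : ℝ) * (k.descFactorial (j+1) : ℝ) := by
      intro j _
      have : St (m+1) (j+1) = St m j + (j+1) * St m (j+1) := rfl
      rw [this]
      push_cast
      ring
    rw [Finset.sum_congr rfl h3, Finset.sum_add_distrib]
    congr 1
    -- ∑_{j∈range(m+1)} St m j * (j * dF j) = ∑_{j∈range(m+1)} (j+1) St m (j+1) dF (j+1)
    have h4 : ∑ j ∈ Finset.range (m+2), (St m j : ℝ) * ((j:ℝ) * (k.descFactorial j : ℝ))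
        = ∑ j ∈ Finset.range (m+1), (St m j : ℝ) * ((j:ℝ) * (k.descFactorial j : ℝ)) := by
      rw [Finset.sum_range_succ, St_gt m (m+1) (by omega)]
      norm_num
    rw [← h4, Finset.sum_range_succ'
      (fun j => (St m j : ℝ) * ((j:ℝ) * (k.descFactorial j : ℝ))) (m+1)]
    push_cast
    norm_num
    exact Finset.sum_congr rfl fun j _ => by push_cast; ring

lemma evalDeriv_sum (p : ℝ[X]) (j : ℕ) :
    (derivative^[j] p).eval 1
      = ∑ k ∈ Finset.range (p.natDegree + 1), (k.descFactorial j : ℝ) * p.coeff k := by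
  conv_lhs => rw [p.as_sum_range]
  rw [iterate_derivative_sum, eval_finset_sum]
  refine Finset.sum_congr rfl fun k _ => ?_
  rw [← C_mul_X_pow_eq_monomial, iterate_derivative_C_mul,
    iterate_derivative_X_pow_eq_C_mul]
  simp [mul_comm]

lemma tsum_moment (p : ℝ[X]) (m : ℕ) :
    (∑' k : ℕ, (k:ℝ)^m * p.coeff k)
      = ∑ k ∈ Finset.range (p.natDegree + 1), (k:ℝ)^m * p.coeff k := by
  refine tsum_eq_sum fun k hk => ?_
  rw [coeff_eq_zero_of_natDegree_lt (by
    have := Finset.mem_range.not.mp hk; omega), mul_zero]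

lemma moment_eq (p : ℝ[X]) (m : ℕ) :
    (∑' k : ℕ, (k:ℝ)^m * p.coeff k)
      = ∑ j ∈ Finset.range (m+1), (St m j : ℝ) * (derivative^[j] p).eval 1 := by
  rw [tsum_moment]
  have h1 : ∀ k ∈ Finset.range (p.natDegree+1), (k:ℝ)^m * p.coeff k
      = ∑ j ∈ Finset.range (m+1),
          (St m j : ℝ) * ((k.descFactorial j : ℝ) * p.coeff k) := by
    intro k _
    rw [pow_desc, Finset.sum_mul]
    exact Finset.sum_congr rfl fun j _ => by ring
  rw [Finset.sum_congr rfl h1, Finset.sum_comm]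
  refine Finset.sum_congr rfl fun j _ => ?_
  rw [evalDeriv_sum, Finset.mul_sum]

lemma iterDeriv_poly (m : ℕ) (q : ℝ[X]) (t : ℝ) :
    iteratedDeriv m (fun s : ℝ => q.eval s) t = (derivative^[m] q).eval t := by
  induction m generalizing q with
  | zero => simp
  | succ k ih =>
    rw [iteratedDeriv_succ']
    have hd : (deriv fun s : ℝ => q.eval s) = fun s : ℝ => (derivative q).eval s := by
      funext s
      exact Polynomial.deriv q
    rw [hd, ih (derivative q), ← Function.iterate_succ_apply]

lemma iter_deriv_comp (m : ℕ) (p : ℝ[X]) :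
    derivative^[m] (p.comp (C 1 + X)) = (derivative^[m] p).comp (C 1 + X) := by
  induction m with
  | zero => rfl
  | succ k ih =>
    rw [Function.iterate_succ_apply', ih, derivative_comp]
    simp [Function.iterate_succ_apply']

lemma Q_eq (p : ℝ[X]) (m : ℕ) :
    iteratedDeriv m (fun t : ℝ => p.eval (1+t) / p.eval 1) 0
      = (derivative^[m] p).eval 1 / p.eval 1 := by
  have hfun : (fun t : ℝ => p.eval (1+t) / p.eval 1)
      = fun t : ℝ => (p.comp (C 1 + X) * C (p.eval 1)⁻¹).eval t := by
    funext t
    rw [eval_mul, eval_comp, eval_C, div_eq_mul_inv]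
    simp
  rw [hfun, iterDeriv_poly]
  have hC : derivative^[m] (p.comp (C 1 + X) * C (p.eval 1)⁻¹)
      = derivative^[m] (p.comp (C 1 + X)) * C (p.eval 1)⁻¹ := by
    rw [mul_comm, iterate_derivative_C_mul, mul_comm]
  rw [hC, iter_deriv_comp, eval_mul, eval_comp, eval_C]
  simp [div_eq_mul_inv]



lemma Gamma_prod (x : ℝ) (hx : x < 1) (M : ℕ) :
    Real.Gamma ((M:ℝ)+1-x) = (∏ i ∈ Finset.range M, ((i:ℝ)+1-x)) * Real.Gamma (1-x) := by
  induction M with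
  | zero => simp
  | succ k ih =>
    have hk : (0:ℝ) ≤ (k:ℝ) := Nat.cast_nonneg k
    have harg : ((k+1:ℕ):ℝ)+1-x = ((k:ℝ)+1-x)+1 := by push_cast; ring
    rw [harg, Real.Gamma_add_one (ne_of_gt (by nlinarith : (0:ℝ) < (k:ℝ)+1-x)), ih, Finset.prod_range_succ]
    push_cast
    ring

end Prop66

/-- **Proposition 6.6 (asymptotics of the moments for `β < 0`).**
With `τ₁ = -β/α > 0` and `τ₂ = γ/α`, the `m`-th moment and the `m`-th factorial moment of
`X_n` are both asymptotic to `K_m n^{mτ₁}` where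
`K_m = (Γ(m-γ'/β') Γ(1+τ₂) / (Γ(1-γ'/β') Γ(1+τ₂+mτ₁))) (m c₁/c₀ - γ'/β) (β'/β)^{m-1}`. -/
theorem continuous_moment_asymptotics
    (α β β' γ γ' c₀ c₁ : ℝ)
    (hα : 0 < α) (hγ : 0 ≤ γ) (hc₀ : 0 < c₀) (hβ : β < 0) (hβ' : β' ≠ 0)
    (hγβ : γ' / β' < 1)
    (P : ℕ → Polynomial ℝ)
    (hP0 : P 0 = C c₀ + C c₁ * (X - 1))
    (hrec : ∀ n : ℕ, P (n + 1) =
      (C (α * ((n : ℝ) + 1) + γ) + C γ' * (X - 1)) * P n +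
        (C β + C β' * (X - 1)) * (1 - X) * derivative (P n))
    (hcoeff : ∀ n k, 0 ≤ (P n).coeff k)
    (hP1 : ∀ n, 0 < (P n).eval 1)
    (Q : ℕ → ℕ → ℝ)
    (hQ : ∀ n m, Q n m =
      iteratedDeriv m (fun t : ℝ => (P n).eval (1 + t) / (P n).eval 1) 0)
    (K : ℕ → ℝ)
    (hK : ∀ m : ℕ, K m =
      Real.Gamma ((m : ℝ) - γ' / β') * Real.Gamma (1 + γ / α) /
          (Real.Gamma (1 - γ' / β') * Real.Gamma (1 + γ / α + (m : ℝ) * (-β / α))) *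
        ((m : ℝ) * c₁ / c₀ - γ' / β) * (β' / β) ^ (m - 1)) :
    ∀ m : ℕ, 1 ≤ m →
      Tendsto
        (fun n : ℕ =>
          ((∑' k : ℕ, (k : ℝ) ^ m * (P n).coeff k) / (P n).eval 1) /
            (n : ℝ) ^ ((m : ℝ) * (-β / α)))
        atTop (𝓝 (K m)) ∧
      Tendsto
        (fun n : ℕ => Q n m / (n : ℝ) ^ ((m : ℝ) * (-β / α)))
        atTop (𝓝 (K m)) := by
  have hβne : β ≠ 0 := ne_of_lt hβ
  have hc₀ne : c₀ ≠ 0 := ne_of_gt hc₀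
  have hτ : 0 < -β/α := div_pos (by linarith) hα
  have hCF := Prop66.closed_form α β β' γ γ' c₀ c₁ hβne hβ' P hP0 hrec
  have hD0 : ∀ n, (P n).eval 1 = c₀ * Prop66.Pp α β γ 0 n := by
    intro n
    have h := hCF n 0
    rw [Function.iterate_zero_apply, Finset.sum_range_one, Prop66.aa_zero] at h
    rw [h]
    norm_num
  have hQall : ∀ j : ℕ, Tendsto
      (fun n : ℕ => ((derivative^[j] (P n)).eval 1 / (P n).eval 1) / (n:ℝ)^((j:ℝ)*(-β/α)))
      atTop (𝓝 (Prop66.aa β β' γ' c₀ c₁ j j / c₀ *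
        (Real.Gamma (1+γ/α) / Real.Gamma (1+γ/α+(j:ℝ)*(-β/α))))) := by
    intro j
    have hs := Prop66.sum_scaled_tendsto j (fun i => Prop66.aa β β' γ' c₀ c₁ j i / c₀)
      (fun i n => Prop66.Pp α β γ i n / Prop66.Pp α β γ 0 n)
      (fun i => Real.Gamma (1+γ/α) / Real.Gamma (1+γ/α+(i:ℝ)*(-β/α))) (-β/α) hτ
      (fun i _ => Prop66.Pp_ratio_tendsto α β γ hα hγ hβ i)
    refine Tendsto.congr (fun n => ?_) hs
    congr 1
    rw [hCF n j, hD0 n, Finset.sum_div]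
    refine Finset.sum_congr rfl fun i _ => ?_
    show Prop66.aa β β' γ' c₀ c₁ j i / c₀ * (Prop66.Pp α β γ i n / Prop66.Pp α β γ 0 n) = _
    rw [div_mul_div_comm]
  have hK1 : ∀ M : ℕ, Prop66.aa β β' γ' c₀ c₁ (M+1) (M+1) / c₀ *
      (Real.Gamma (1+γ/α) / Real.Gamma (1+γ/α+((M+1:ℕ):ℝ)*(-β/α))) = K (M+1) := by
    intro M
    have hM : (0:ℝ) ≤ (M:ℝ) := Nat.cast_nonneg M
    have hF := Prop66.Gamma_prod (γ'/β') hγβ M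
    have haa : Prop66.aa β β' γ' c₀ c₁ (M+1) (M+1)
        = (((M:ℝ)+1)*c₁ - c₀*γ'/β) * (β'/β)^M *
          ∏ i ∈ Finset.range M, ((i:ℝ)+1-γ'/β') := by
      rw [Prop66.aa_succ, Nat.sub_self, pow_zero, Nat.choose_self, Nat.cast_one,
        Nat.add_sub_cancel]
      ring
    have hΓ1x : Real.Gamma (1-γ'/β') ≠ 0 :=
      ne_of_gt (Real.Gamma_pos_of_pos (by linarith))
    have hΓc : Real.Gamma (1+γ/α+((M:ℝ)+1)*(-β/α)) ≠ 0 := by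
      refine ne_of_gt (Real.Gamma_pos_of_pos ?_)
      have h1 : (0:ℝ) ≤ γ/α := by positivity
      nlinarith
    rw [hK (M+1), haa]
    simp only [Nat.add_sub_cancel]
    push_cast
    rw [hF]
    have h3 : (((M:ℝ)+1)*c₁ - c₀*γ'/β)/c₀ = ((M:ℝ)+1)*c₁/c₀ - γ'/β := by
      field_simp
    have h4 : (∏ i ∈ Finset.range M, ((i:ℝ)+1-γ'/β')) * Real.Gamma (1-γ'/β')
          * Real.Gamma (1+γ/α) / (Real.Gamma (1-γ'/β') * Real.Gamma (1+γ/α+((M:ℝ)+1)*(-β/α)))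
        = (∏ i ∈ Finset.range M, ((i:ℝ)+1-γ'/β'))
          * (Real.Gamma (1+γ/α) / Real.Gamma (1+γ/α+((M:ℝ)+1)*(-β/α))) := by
      rw [mul_div_assoc']
      rw [show (∏ i ∈ Finset.range M, ((i:ℝ)+1-γ'/β')) * Real.Gamma (1-γ'/β') * Real.Gamma (1+γ/α)
          = Real.Gamma (1-γ'/β') * ((∏ i ∈ Finset.range M, ((i:ℝ)+1-γ'/β')) * Real.Gamma (1+γ/α)) by ring]
      rw [mul_div_mul_left _ _ hΓ1x, mul_div_assoc]
    rw [h4]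
    calc (((M:ℝ)+1)*c₁ - c₀*γ'/β) * (β'/β)^M * (∏ i ∈ Finset.range M, ((i:ℝ)+1-γ'/β')) / c₀
          * (Real.Gamma (1+γ/α) / Real.Gamma (1+γ/α+((M:ℝ)+1)*(-β/α)))
        = ((((M:ℝ)+1)*c₁ - c₀*γ'/β)/c₀) * ((β'/β)^M * (∏ i ∈ Finset.range M, ((i:ℝ)+1-γ'/β'))
          * (Real.Gamma (1+γ/α) / Real.Gamma (1+γ/α+((M:ℝ)+1)*(-β/α)))) := by ring
      _ = (((M:ℝ)+1)*c₁/c₀ - γ'/β) * ((β'/β)^M * (∏ i ∈ Finset.range M, ((i:ℝ)+1-γ'/β'))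
          * (Real.Gamma (1+γ/α) / Real.Gamma (1+γ/α+((M:ℝ)+1)*(-β/α)))) := by rw [h3]
      _ = _ := by ring
  intro m hm
  obtain ⟨M, rfl⟩ : ∃ M, m = M + 1 := ⟨m - 1, by omega⟩
  constructor
  · have hs := Prop66.sum_scaled_tendsto (M+1) (fun j => (Prop66.St (M+1) j : ℝ))
      (fun j n => (derivative^[j] (P n)).eval 1 / (P n).eval 1)
      (fun j => Prop66.aa β β' γ' c₀ c₁ j j / c₀ *
        (Real.Gamma (1+γ/α) / Real.Gamma (1+γ/α+(j:ℝ)*(-β/α)))) (-β/α) hτ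
      (fun j _ => hQall j)
    rw [Prop66.St_self (M+1), Nat.cast_one, one_mul, hK1 M] at hs
    refine Tendsto.congr (fun n => ?_) hs
    congr 1
    rw [Prop66.moment_eq (P n) (M+1), Finset.sum_div]
    exact Finset.sum_congr rfl fun j _ => (mul_div_assoc _ _ _).symm
  · have h := hQall (M+1)
    rw [hK1 M] at h
    refine Tendsto.congr (fun n => ?_) h
    congr 1
    rw [hQ n (M+1), Prop66.Q_eq (P n) (M+1)]
end
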